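/- arXiv:1605.07881 — 11 statements merged into one kernel-verified Lean document; each statement's English description precedes it below -/
import Mathlib

section
/- Let V = {π₁(x) : x ∈ Λ, π₂(x) ∈ W} be a d-dimensional cut-and-project set with convex window W. Then for every finite family F of convex subsets of ℝ^d with at least 2^{d+k} members, if every 2^{d+k} members of F have a common point belonging to V, then all members of F have a common point belonging to V (i.e. the Helly number of V is at most 2^{d+k}). -/
/-!
Coordinates with respect to `b` identify `Λ` with `ℤ^(d+k)`, and a point of `V` lying in every
`F i` is the first component of a lattice point lying in every `F i ×ˢ W`. So the bound is
Doignon's theorem for the convex sets `F i ×ˢ W`.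

Doignon's theorem: suppose convex sets `A i ⊆ ℝⁿ` have no common integer point although every `2ⁿ`
of them have one. Let `L` be the finite set of integer points in the convex hull of witnesses for
all subfamilies of size at most `2ⁿ`. Each `z ∈ L` misses some `A i`, and an integer functional
(a rounded multiple of a real separating functional) separates `z` from the integer points of
`L ∩ A i`. These integer half-spaces have no common point in `L`. Raise their right-hand sides as
far as possible while keeping the system infeasible on `L`: then every constraint that is not
vacuous on `L` has a point of `L` violating it by at most one and satisfying all the others.
Two of more than `2ⁿ` such points agree modulo 2, and their midpoint lies in `L` and, by
integrality, satisfies every constraint. So at most `2ⁿ` of the half-spaces already have no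
common point in `L`, which contradicts the witness for the corresponding `2ⁿ` sets.
-/

open Set

variable {n : ℕ}

theorem exists_intCast_mem_of_isOpen_of_smul_mem {U : Set (Fin n → ℝ)} (hU : IsOpen U)
    (hcone : ∀ t : ℝ, 0 < t → ∀ v ∈ U, t • v ∈ U) {v : Fin n → ℝ} (hv : v ∈ U) :
    ∃ c : Fin n → ℤ, Int.cast ∘ c ∈ U := by
  obtain ⟨ε, hε, hball⟩ := Metric.isOpen_iff.mp hU v hv
  obtain ⟨N, hN⟩ := exists_nat_one_div_lt hε
  set t : ℝ := N + 1
  have ht : 0 < t := by positivity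
  refine ⟨fun j => ⌊t * v j⌋, ?_⟩
  have happrox : t⁻¹ • (Int.cast ∘ fun j => ⌊t * v j⌋) ∈ U := by
    refine hball ((dist_pi_lt_iff hε).mpr fun j => ?_)
    have hfract : v j - t⁻¹ * ⌊t * v j⌋ = t⁻¹ * Int.fract (t * v j) := by
      rw [Int.fract]; field_simp
    have h₀ : 0 ≤ t⁻¹ * Int.fract (t * v j) := by positivity
    have h₁ : t⁻¹ * Int.fract (t * v j) < t⁻¹ :=
      mul_lt_of_lt_one_right (by positivity) (Int.fract_lt_one _)
    rw [one_div] at hN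
    simp only [Real.dist_eq, abs_sub_lt_iff, Pi.smul_apply, Function.comp_apply, smul_eq_mul]
    constructor <;> linarith
  simpa [smul_smul, ht.ne'] using hcone t ht _ happrox

theorem exists_dotProduct_intCast_lt_of_notMem_convexHull {S : Set (Fin n → ℝ)} (hS : S.Finite)
    {x : Fin n → ℝ} (hx : x ∉ convexHull ℝ S) :
    ∃ c : Fin n → ℤ, ∀ y ∈ S, y ⬝ᵥ (Int.cast ∘ c) < x ⬝ᵥ (Int.cast ∘ c) := by
  obtain ⟨f, u, hfu, hux⟩ := geometric_hahn_banach_closed_point (convex_convexHull ℝ S)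
    (hS.isClosed_convexHull (𝕜 := ℝ)) hx
  have hU : IsOpen {v : Fin n → ℝ | ∀ y ∈ S, y ⬝ᵥ v < x ⬝ᵥ v} := by
    simp only [ofPred_forall]
    exact hS.isOpen_biInter fun y _ => isOpen_lt (by fun_prop) (by fun_prop)
  have hf : ∀ y, f y = y ⬝ᵥ fun j => f fun k => if j = k then 1 else 0 := fun y => by
    simpa [dotProduct] using f.toLinearMap.pi_apply_eq_sum_univ y
  refine exists_intCast_mem_of_isOpen_of_smul_mem hU
    (fun t ht v hv y hy => by simpa [dotProduct_smul, ht] using hv y hy)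
    (v := fun j => f fun k => if j = k then 1 else 0) fun y hy => ?_
  rw [← hf, ← hf]
  exact (hfu y (subset_convexHull ℝ S hy)).trans hux

theorem finite_setOf_intCast_mem_of_isBounded {T : Set (Fin n → ℝ)} (hT : Bornology.IsBounded T) :
    {c : Fin n → ℤ | Int.cast ∘ c ∈ T}.Finite := by
  have hemb : Topology.IsClosedEmbedding (fun c : Fin n → ℤ => (Int.cast ∘ c : Fin n → ℝ)) :=
    Topology.IsClosedEmbedding.piMap fun _ => Int.isClosedEmbedding_coe_real
  exact (hemb.isCompact_preimage hT.isCompact_closure).finite_of_discrete.subset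
    fun c hc => subset_closure hc

theorem exists_ne_add_eq_two_smul_of_two_pow_lt_card {κ : Type*} {R : Finset κ}
    (hR : 2 ^ n < R.card) (w : κ → Fin n → ℤ) :
    ∃ p ∈ R, ∃ q ∈ R, p ≠ q ∧ ∃ m, w p + w q = 2 • m := by
  have hcard : (Finset.univ : Finset (Fin n → ZMod 2)).card < R.card := by simpa using hR
  obtain ⟨p, hp, q, hq, hpq, hmod⟩ := Finset.exists_ne_map_eq_of_card_lt_of_maps_to hcard
    (f := fun r j => (w r j : ZMod 2)) fun _ _ => Finset.mem_univ _
  choose k hk using fun j => (ZMod.intCast_eq_intCast_iff_dvd_sub _ _ 2).mp (congrFun hmod j)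
  refine ⟨p, hp, q, hq, hpq, w p + k, funext fun j => ?_⟩
  simp only [Pi.add_apply, Pi.smul_apply, two_nsmul]
  push_cast at hk
  linarith [hk j]

theorem Convex.intCast_mem_of_add_eq_two_smul {K : Set (Fin n → ℝ)} (hK : Convex ℝ K)
    {p q m : Fin n → ℤ} (hp : Int.cast ∘ p ∈ K) (hq : Int.cast ∘ q ∈ K)
    (hm : p + q = 2 • m) : Int.cast ∘ m ∈ K := by
  convert hK hp hq (by norm_num : (0 : ℝ) ≤ 1 / 2) (by norm_num : (0 : ℝ) ≤ 1 / 2) (by norm_num)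
    using 1
  funext j
  have := congrFun hm j
  simp only [Pi.add_apply, Pi.smul_apply, two_nsmul] at this
  simp only [Function.comp_apply, Pi.add_apply, Pi.smul_apply, smul_eq_mul]
  have : (p j : ℝ) + q j = m j + m j := by exact_mod_cast this
  linarith

theorem card_le_two_pow_of_relaxed_solutions {κ : Type*} {K : Set (Fin n → ℝ)} (hK : Convex ℝ K)
    (a : κ → Fin n → ℤ) (β : κ → ℤ) (hβ : ∀ y : Fin n → ℤ, Int.cast ∘ y ∈ K → ∃ s, β s < y ⬝ᵥ a s)
    (R : Finset κ) (w : κ → Fin n → ℤ) (hwK : ∀ r ∈ R, Int.cast ∘ w r ∈ K)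
    (hw_le : ∀ r ∈ R, w r ⬝ᵥ a r ≤ β r + 1) (hw_ne : ∀ r ∈ R, ∀ s ≠ r, w r ⬝ᵥ a s ≤ β s) :
    R.card ≤ 2 ^ n := by
  by_contra! hR
  obtain ⟨p, hp, q, hq, hpq, m, hm⟩ := exists_ne_add_eq_two_smul_of_two_pow_lt_card hR w
  obtain ⟨s, hs⟩ := hβ m (hK.intCast_mem_of_add_eq_two_smul (hwK p hp) (hwK q hq) hm)
  have hsum : w p ⬝ᵥ a s + w q ⬝ᵥ a s = 2 * (m ⬝ᵥ a s) := by
    rw [← add_dotProduct, hm, smul_dotProduct, nsmul_eq_mul, Nat.cast_ofNat]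
  rcases eq_or_ne s p with rfl | hsp
  · have := hw_ne q hq s hpq; have := hw_le s hp; omega
  rcases eq_or_ne s q with rfl | hsq
  · have := hw_ne p hp s hsp; have := hw_le s hq; omega
  have := hw_ne p hp s hsp; have := hw_ne q hq s hsq; omega

theorem exists_card_le_two_pow_of_forall_exists_lt_dotProduct {κ : Type*} [Finite κ]
    {K : Set (Fin n → ℝ)} (hK : Convex ℝ K)
    (hKfin : {y : Fin n → ℤ | Int.cast ∘ y ∈ K}.Finite) (a : κ → Fin n → ℤ) (b : κ → ℤ)
    (hb : ∀ y : Fin n → ℤ, Int.cast ∘ y ∈ K → ∃ r, b r < y ⬝ᵥ a r) :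
    ∃ R : Finset κ, R.card ≤ 2 ^ n ∧
      ∀ y : Fin n → ℤ, Int.cast ∘ y ∈ K → ∃ r ∈ R, b r < y ⬝ᵥ a r := by
  classical
  have := Fintype.ofFinite κ
  set L := {y : Fin n → ℤ | Int.cast ∘ y ∈ K}
  obtain ⟨M, hbM, hM⟩ : ∃ M : κ → ℤ, b ≤ M ∧ ∀ r, ∀ y ∈ L, y ⬝ᵥ a r ≤ M r := by
    choose M hM using fun r => ((hKfin.image (· ⬝ᵥ a r)).insert (b r)).bddAbove
    exact ⟨M, fun r => hM r (mem_insert _ _),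
      fun r y hy => hM r (mem_insert_of_mem _ (mem_image_of_mem _ hy))⟩
  obtain ⟨β, ⟨⟨hbβ, hβM⟩, hβ⟩, hmax⟩ :
      ∃ β, Maximal (fun β => β ∈ Icc b M ∧ ∀ y ∈ L, ∃ r, β r < y ⬝ᵥ a r) β :=
    ((finite_Icc b M).subset fun _ h => h.1).exists_maximal ⟨b, ⟨le_rfl, hbM⟩, hb⟩
  have hrelax : ∀ r, β r < M r → ∃ w ∈ L, ∀ s, w ⬝ᵥ a s ≤ Function.update β r (β r + 1) s := by
    intro r hr
    have hββ' : β ≤ Function.update β r (β r + 1) := le_update_self_iff.mpr (by omega)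
    by_contra! h
    refine (lt_add_one (β r)).not_ge ?_
    simpa using hmax ⟨⟨hbβ.trans hββ', update_le_iff.mpr ⟨hr, fun s _ => hβM s⟩⟩, h⟩ hββ' r
  choose! w hwL hw using hrelax
  set R := Finset.univ.filter fun r => β r < M r
  have hR : ∀ r ∈ R, β r < M r := fun r hr => (Finset.mem_filter.mp hr).2
  refine ⟨R, card_le_two_pow_of_relaxed_solutions hK a β hβ R w (fun r hr => hwL r (hR r hr))
    (fun r hr => by simpa using hw r (hR r hr) r)
    (fun r hr s hs => by simpa [hs] using hw r (hR r hr) s), fun y hy => ?_⟩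
  obtain ⟨r, hr⟩ := hβ y hy
  exact ⟨r, by simpa [R] using hr.trans_le (hM r y hy), (hbβ r).trans_lt hr⟩

theorem intCast_dotProduct_intCast (v w : Fin n → ℤ) :
    (Int.cast ∘ v) ⬝ᵥ (Int.cast ∘ w) = ((v ⬝ᵥ w : ℤ) : ℝ) :=
  ((Int.castRingHom ℝ).map_dotProduct v w).symm

theorem exists_dotProduct_lt_of_intCast_notMem {K A : Set (Fin n → ℝ)}
    (hK : {c : Fin n → ℤ | Int.cast ∘ c ∈ K}.Finite) (hA : Convex ℝ A) {z : Fin n → ℤ}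
    (hz : Int.cast ∘ z ∉ A) :
    ∃ a : Fin n → ℤ, ∀ w : Fin n → ℤ,
      Int.cast ∘ w ∈ K → Int.cast ∘ w ∈ A → w ⬝ᵥ a < z ⬝ᵥ a := by
  set S := {w : Fin n → ℤ | Int.cast ∘ w ∈ K ∧ Int.cast ∘ w ∈ A}
  have hzS : Int.cast ∘ z ∉ convexHull ℝ ((Int.cast ∘ ·) '' S) :=
    fun h => hz (convexHull_min (by rintro _ ⟨w, ⟨_, hw⟩, rfl⟩; exact hw) hA h)
  obtain ⟨a, ha⟩ :=
    exists_dotProduct_intCast_lt_of_notMem_convexHull ((hK.subset fun _ h => h.1).image _) hzS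
  refine ⟨a, fun w hwK hwA => ?_⟩
  have := ha _ ⟨w, ⟨hwK, hwA⟩, rfl⟩
  rw [intCast_dotProduct_intCast, intCast_dotProduct_intCast] at this
  exact_mod_cast this

theorem doignon_theorem {ι : Type*} [Fintype ι] (A : ι → Set (Fin n → ℝ)) (hA : ∀ i, Convex ℝ (A i))
    (hcard : 2 ^ n ≤ Fintype.card ι)
    (hH : ∀ G : Finset ι, G.card = 2 ^ n → ∃ c : Fin n → ℤ, ∀ i ∈ G, Int.cast ∘ c ∈ A i) :
    ∃ c : Fin n → ℤ, ∀ i, Int.cast ∘ c ∈ A i := by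
  classical
  have hsmall : ∀ G : Finset ι, ∃ c : Fin n → ℤ,
      G.card ≤ 2 ^ n → ∀ i ∈ G, Int.cast ∘ c ∈ A i := by
    intro G
    by_cases hG : G.card ≤ 2 ^ n
    · obtain ⟨G', hGG', hG'⟩ := Finset.exists_superset_card_eq hG hcard
      obtain ⟨c, hc⟩ := hH G' hG'
      exact ⟨c, fun _ i hi => hc i (hGG' hi)⟩
    · exact ⟨0, fun h => absurd h hG⟩
  choose y hy using hsmall
  set K := convexHull ℝ (range fun G => (Int.cast ∘ y G : Fin n → ℝ))
  have hyK : ∀ G, Int.cast ∘ y G ∈ K := fun G => subset_convexHull ℝ _ ⟨G, rfl⟩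
  set L := {c : Fin n → ℤ | Int.cast ∘ c ∈ K}
  have hLfin : L.Finite :=
    finite_setOf_intCast_mem_of_isBounded ((finite_range _).isCompact_convexHull ℝ).isBounded
  by_contra! hout
  choose i hi using hout
  choose a ha using fun z => exists_dotProduct_lt_of_intCast_notMem hLfin (hA (i z)) (hi z)
  have := hLfin.to_subtype
  obtain ⟨R, hRcard, hR⟩ := exists_card_le_two_pow_of_forall_exists_lt_dotProduct
    (convex_convexHull ℝ _) hLfin (fun z : L => a z) (fun z => z.1 ⬝ᵥ a z - 1)
    fun w hw => ⟨⟨w, hw⟩, by simp⟩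
  set G := R.image fun r : L => i r
  obtain ⟨r, hr, hlt⟩ := hR (y G) (hyK G)
  have := ha r (y G) (hyK G)
    (hy G (Finset.card_image_le.trans hRcard) _ (Finset.mem_image_of_mem _ hr))
  omega

theorem doignon_theorem_of_basis {E : Type*} [AddCommGroup E] [Module ℝ E]
    (b : Module.Basis (Fin n) ℝ E)
    {ι : Type*} [Fintype ι] (A : ι → Set E) (hA : ∀ i, Convex ℝ (A i))
    (hcard : 2 ^ n ≤ Fintype.card ι)
    (hH : ∀ G : Finset ι, G.card = 2 ^ n → ∃ c : Fin n → ℤ, ∀ i ∈ G, ∑ j, (c j : ℝ) • b j ∈ A i) :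
    ∃ c : Fin n → ℤ, ∀ i, ∑ j, (c j : ℝ) • b j ∈ A i := by
  have hcoord : ∀ (c : Fin n → ℤ) i,
      ∑ j, (c j : ℝ) • b j ∈ A i ↔ Int.cast ∘ c ∈ b.equivFun.symm ⁻¹' A i := by
    simp [Module.Basis.equivFun_symm_apply]
  simp only [hcoord] at hH ⊢
  exact doignon_theorem _ (fun i => (hA i).linear_preimage b.equivFun.symm.toLinearMap) hcard hH

theorem cut_and_project_helly_general (d k : ℕ)
    (b : Module.Basis (Fin (d + k)) ℝ ((Fin d → ℝ) × (Fin k → ℝ)))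
    (Λ : Set ((Fin d → ℝ) × (Fin k → ℝ)))
    (hΛ : Λ = {x | ∃ c : Fin (d + k) → ℤ, x = ∑ i, (c i : ℝ) • b i})
    (W : Set (Fin k → ℝ)) (hWconv : Convex ℝ W)
    (V : Set (Fin d → ℝ)) (hV : V = {p | ∃ x ∈ Λ, x.2 ∈ W ∧ x.1 = p})
    (ι : Type) [Fintype ι] (F : ι → Set (Fin d → ℝ))
    (hFconv : ∀ i, Convex ℝ (F i))
    (hFcard : 2 ^ (d + k) ≤ Fintype.card ι)
    (hF : ∀ G : Finset ι, G.card = 2 ^ (d + k) → ∃ p ∈ V, ∀ i ∈ G, p ∈ F i) :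
    ∃ p ∈ V, ∀ i, p ∈ F i := by
  subst hΛ hV
  obtain ⟨c, hc⟩ := doignon_theorem_of_basis b (fun i => F i ×ˢ W)
    (fun i => (hFconv i).prod hWconv) hFcard
    fun G hG => by
      obtain ⟨_, ⟨_, ⟨c, rfl⟩, hW, rfl⟩, hpF⟩ := hF G hG
      exact ⟨c, fun i hi => ⟨hpF i hi, hW⟩⟩
  obtain ⟨i₀⟩ : Nonempty ι := Fintype.card_pos_iff.mp ((Nat.one_le_two_pow).trans hFcard)
  exact ⟨_, ⟨_, ⟨c, rfl⟩, (hc i₀).2, rfl⟩, fun i => (hc i).1⟩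

/-- Helly number of a cut-and-project set with convex window is at most `2^(d+k)`. -/
theorem cut_and_project_helly (d k : ℕ) (hd : 1 ≤ d) (hk : 1 ≤ k)
    (b : Module.Basis (Fin (d + k)) ℝ ((Fin d → ℝ) × (Fin k → ℝ)))
    (Λ : Set ((Fin d → ℝ) × (Fin k → ℝ)))
    (hΛ : Λ = {x | ∃ c : Fin (d + k) → ℤ, x = ∑ i, (c i : ℝ) • b i})
    (hinj : Set.InjOn Prod.fst Λ)
    (W : Set (Fin k → ℝ)) (hWcpt : IsCompact W) (hWconv : Convex ℝ W)
    (hWreg : closure (interior W) = W)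
    (V : Set (Fin d → ℝ)) (hV : V = {p | ∃ x ∈ Λ, x.2 ∈ W ∧ x.1 = p})
    (ι : Type) [Fintype ι] (F : ι → Set (Fin d → ℝ))
    (hFconv : ∀ i, Convex ℝ (F i))
    (hFcard : 2 ^ (d + k) ≤ Fintype.card ι)
    (hF : ∀ G : Finset ι, G.card = 2 ^ (d + k) → ∃ p ∈ V, ∀ i ∈ G, p ∈ F i) :
    ∃ p ∈ V, ∀ i, p ∈ F i :=
  cut_and_project_helly_general d k b Λ hΛ W hWconv V hV ι F hFconv hFcard hF
end

section
/- Let S be a d-dimensional k-crystal. Then for every finite family F of convex subsets of ℝ^d with at least k·2^d members, if every k·2^d members of F have a common point belonging to S, then all members of F have a common point belonging to S (i.e. the Helly number of S is at most k·2^d). -/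
/-!
By induction on the size of the family it suffices to treat a family of more than `k * 2 ^ d`
convex sets, each of which is missed by a point `xᵢ ∈ S` lying in all the others. If some `xᵢ` lies
in the convex hull of the others, it is a common point. Otherwise, by pigeonhole, two of the
points lie in the same translate `Λ + tᵣ` and agree modulo `2Λ`, so their midpoint `w` is again in
`S`. Replacing one of the two points by `w` (after enlarging one member of the family by `w` if
`w` lies in neither of the two sets it may miss) keeps every configuration inside the old convex
hull but loses a vertex, so the number of points of `S` in the convex hull, finite as `S` is
discrete, strictly drops; induction on that number produces a common point.
-/

open Set Function

universe u

section ConvexGeometry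

variable {E : Type*} [AddCommGroup E] [Module ℝ E]

lemma mem_convexHull_of_mem_convexHull_insert_of_mem_convexHull_insert {a z : E} {T : Set E}
    (hz : z ∈ convexHull ℝ (insert a T)) (ha : a ∈ convexHull ℝ (insert z T)) (hza : z ≠ a) :
    a ∈ convexHull ℝ T := by
  rcases T.eq_empty_or_nonempty with rfl | hT
  · simp_all
  rw [convexHull_insert hT, mem_convexJoin] at hz ha
  obtain ⟨_, rfl, c', hc', hzc'⟩ := hz
  obtain ⟨_, rfl, c, hc, hac⟩ := ha
  rw [mem_segment_iff_wbtw] at hzc' hac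
  exact (convex_convexHull ℝ T).segment_subset hc' hc
    (mem_segment_iff_wbtw.2 (hzc'.symm.trans_expand_right hac hza))

lemma Convex.mem_of_wbtw_of_mem_convexHull_insert {C : Set E} (hC : Convex ℝ C) {a w b : E}
    (ha : a ∈ C) (hw : Wbtw ℝ a w b) (hwb : w ≠ b) (hb : b ∈ convexHull ℝ (insert w C)) :
    b ∈ C := by
  have hw' : w ∈ convexHull ℝ (insert b C) :=
    segment_subset_convexHull (mem_insert_of_mem _ ha) (mem_insert _ _) (mem_segment_iff_wbtw.2 hw)
  simpa [hC.convexHull_eq] using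
    mem_convexHull_of_mem_convexHull_insert_of_mem_convexHull_insert hw' hb hwb

end ConvexGeometry

lemma Function.range_update_eq_insert_image_compl {α β : Type*} [DecidableEq α] (f : α → β)
    (a : α) (b : β) : range (update f a b) = insert b (f '' {a}ᶜ) := by
  rw [← insert_image_compl_eq_range, update_self,
    image_congr fun x hx => update_of_ne (mem_compl_singleton_iff.1 hx) b f]

section FamilyOfSets

variable {ι β : Type*} {F : ι → Set β}

lemma forall_of_mem_of_forall_ne {p : β} {k : ι} (hk : p ∈ F k)
    (hne : ∀ l, l ≠ k → p ∈ F l) (l : ι) : p ∈ F l :=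
  (eq_or_ne l k).elim (fun h => h ▸ hk) (hne l)

lemma update_mem_of_ne [DecidableEq ι] {x : ι → β} (hxF : ∀ a b, a ≠ b → x a ∈ F b) {i : ι}
    {z : β} (hz : ∀ b, b ≠ i → z ∈ F b) : ∀ a b, a ≠ b → update x i z a ∈ F b := by
  intro a b hab
  rcases eq_or_ne a i with rfl | hai
  · simpa using hz b hab.symm
  · simpa [update_of_ne hai] using hxF a b hab

end FamilyOfSets

section HellyDescent

variable {E : Type*} [AddCommGroup E] [Module ℝ E] {ι : Type*}

lemma forall_mem_of_mem_convexHull_image_compl {F : ι → Set E} (hF : ∀ l, Convex ℝ (F l))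
    {x : ι → E} (hxF : ∀ a b, a ≠ b → x a ∈ F b) {i : ι}
    (hi : x i ∈ convexHull ℝ (x '' {i}ᶜ)) (l : ι) : x i ∈ F l := by
  rcases eq_or_ne i l with rfl | hil
  · exact convexHull_min (image_subset_iff.2 fun a ha => hxF a i ha) (hF i) hi
  · exact hxF i l hil

lemma convexHull_range_update_subset [DecidableEq ι] {x : ι → E} {i : ι} {z : E}
    (hz : z ∈ convexHull ℝ (range x)) :
    convexHull ℝ (range (update x i z)) ⊆ convexHull ℝ (range x) := by
  refine convexHull_min ?_ (convex_convexHull ℝ _)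
  rw [range_update_eq_insert_image_compl]
  exact insert_subset hz ((image_subset_range x _).trans (subset_convexHull ℝ _))

lemma ncard_inter_convexHull_range_update_lt [DecidableEq ι] {S : Set E} {x : ι → E} {i : ι}
    {z : E} (hfin : (S ∩ convexHull ℝ (range x)).Finite) (hxS : x i ∈ S)
    (hvert : x i ∉ convexHull ℝ (x '' {i}ᶜ)) (hz : z ∈ convexHull ℝ (range x)) (hzi : z ≠ x i) :
    (S ∩ convexHull ℝ (range (update x i z))).ncard < (S ∩ convexHull ℝ (range x)).ncard := by
  refine ncard_lt_ncard ((ssubset_iff_of_subset ?_).2 ⟨x i, ⟨hxS, ?_⟩, ?_⟩) hfin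
  · exact inter_subset_inter_right S (convexHull_range_update_subset hz)
  · exact subset_convexHull ℝ _ (mem_range_self i)
  · rintro ⟨-, hxi⟩
    rw [range_update_eq_insert_image_compl] at hxi
    rw [← insert_image_compl_eq_range x i] at hz
    exact hvert (mem_convexHull_of_mem_convexHull_insert_of_mem_convexHull_insert hz hxi hzi)

lemma exists_forall_mem_of_midpoint_mem {S P : Set E} {F : ι → Set E} (hF : ∀ l, Convex ℝ (F l))
    {x : ι → E} (hxF : ∀ a b, a ≠ b → x a ∈ F b) {i j : ι} (hij : i ≠ j) (hxij : x i ≠ x j)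
    (hw : midpoint ℝ (x i) (x j) ∈ S ∩ P)
    -- the induction hypothesis of the descent: a point of `S ∩ P` may take the place of `x a`
    (replace : ∀ G : ι → Set E, (∀ l, Convex ℝ (G l)) → (∀ l, F l ⊆ G l) → ∀ a z, z ∈ S ∩ P →
      z ≠ x a → (∀ b, b ≠ a → z ∈ G b) → ∃ p ∈ S ∩ P, ∀ l, p ∈ G l) :
    ∃ p ∈ S ∩ P, ∀ l, p ∈ F l := by
  classical
  set w := midpoint ℝ (x i) (x j)
  have hwseg : Wbtw ℝ (x i) w (x j) := mem_segment_iff_wbtw.1 (midpoint_mem_segment _ _)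
  have hwF : ∀ l, l ≠ i → l ≠ j → w ∈ F l := fun l hli hlj =>
    (hF l).segment_subset (hxF i l hli.symm) (hxF j l hlj.symm) (mem_segment_iff_wbtw.2 hwseg)
  have hwi : w ≠ x i := fun h => hxij ((midpoint_eq_left_iff ℝ).1 h)
  have hwj : w ≠ x j := fun h => hxij ((midpoint_eq_right_iff ℝ).1 h)
  have hF_refl : ∀ l, F l ⊆ F l := fun _ => subset_rfl
  by_cases hwFi : w ∈ F i <;> by_cases hwFj : w ∈ F j
  · exact ⟨w, hw, forall_of_mem_of_forall_ne hwFi fun l hli =>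
      (eq_or_ne l j).elim (fun h => h ▸ hwFj) (hwF l hli)⟩
  · exact replace F hF hF_refl j w hw hwj fun l hlj =>
      (eq_or_ne l i).elim (fun h => h ▸ hwFi) fun hli => hwF l hli hlj
  · exact replace F hF hF_refl i w hw hwi fun l hli =>
      (eq_or_ne l j).elim (fun h => h ▸ hwFj) (hwF l hli)
  -- Neither `F i` nor `F j` contains `w`: enlarge `F j` by `w`, so that `w` may replace `x i`.
  set G := update F j (convexHull ℝ (insert w (F j)))
  have hFG : ∀ l, F l ⊆ G l := fun l => by
    rcases eq_or_ne l j with rfl | hlj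
    · simpa [G] using (subset_insert w _).trans (subset_convexHull ℝ _)
    · simp [G, hlj]
  have hG : ∀ l, Convex ℝ (G l) := fun l => by
    rcases eq_or_ne l j with rfl | hlj
    · simpa [G] using convex_convexHull ℝ _
    · simpa [G, hlj] using hF l
  obtain ⟨s, hs, hsG⟩ := replace G hG hFG i w hw hwi fun l hli =>
    (eq_or_ne l j).elim (fun h => by simpa [G, h] using subset_convexHull ℝ _ (mem_insert w _))
      fun hlj => hFG l (hwF l hli hlj)
  have hsF : ∀ l, l ≠ j → s ∈ F l := fun l hlj => by simpa [G, hlj] using hsG l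
  by_cases hsFj : s ∈ F j
  · exact ⟨s, hs, forall_of_mem_of_forall_ne hsFj hsF⟩
  -- `s = x j` would put `x j` between `x i ∈ F j` and a point of `F j`.
  have hsxj : s ≠ x j := by
    rintro rfl
    exact hsFj ((hF j).mem_of_wbtw_of_mem_convexHull_insert (hxF i j hij) hwseg hwj
      (by simpa [G] using hsG j))
  exact replace F hF hF_refl j s hs hsxj hsF

theorem exists_mem_convexHull_forall_mem_of_midpoint_mem [Finite ι] {S : Set E}
    (hfin : ∀ T : Set E, T.Finite → (S ∩ convexHull ℝ T).Finite)
    (hmid : ∀ x : ι → E, (∀ i, x i ∈ S) → ∃ i j, i ≠ j ∧ midpoint ℝ (x i) (x j) ∈ S)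
    {F : ι → Set E} (hF : ∀ l, Convex ℝ (F l)) {x : ι → E} (hxS : ∀ i, x i ∈ S)
    (hxF : ∀ a b, a ≠ b → x a ∈ F b) :
    ∃ p ∈ S ∩ convexHull ℝ (range x), ∀ l, p ∈ F l := by
  classical
  induction hn : (S ∩ convexHull ℝ (range x)).ncard using Nat.strong_induction_on
    generalizing F x with
  | _ n ih =>
  have hxP : ∀ i, x i ∈ convexHull ℝ (range x) := fun i => subset_convexHull ℝ _ (mem_range_self i)
  by_cases hvert : ∃ i, x i ∈ convexHull ℝ (x '' {i}ᶜ)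
  · obtain ⟨i, hi⟩ := hvert
    exact ⟨x i, ⟨hxS i, hxP i⟩, forall_mem_of_mem_convexHull_image_compl hF hxF hi⟩
  push Not at hvert
  obtain ⟨i, j, hij, hw⟩ := hmid x hxS
  have hxij : x i ≠ x j := fun h => hvert i (subset_convexHull ℝ _ ⟨j, hij.symm, h.symm⟩)
  refine exists_forall_mem_of_midpoint_mem hF hxF hij hxij
    ⟨hw, (convex_convexHull ℝ _).segment_subset (hxP i) (hxP j) (midpoint_mem_segment _ _)⟩ ?_
  intro G hG hFG a z ⟨hzS, hzP⟩ hza hzG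
  have hlt := ncard_inter_convexHull_range_update_lt (hfin _ (finite_range x)) (hxS a) (hvert a)
    hzP hza
  obtain ⟨p, ⟨hpS, hpP⟩, hpG⟩ := ih _ (hn ▸ hlt) hG
    ((forall_update_iff x fun _ y => y ∈ S).2 ⟨hzS, fun b _ => hxS b⟩)
    (update_mem_of_ne (fun a b hab => hFG b (hxF a b hab)) hzG) rfl
  exact ⟨p, ⟨hpS, convexHull_range_update_subset hzP hpP⟩, hpG⟩

end HellyDescent

theorem helly_of_midpoint_mem {E : Type*} [AddCommGroup E] [Module ℝ E] {S : Set E} {N : ℕ}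
    (hfin : ∀ T : Set E, T.Finite → (S ∩ convexHull ℝ T).Finite)
    (hmid : ∀ (κ : Type u) [Fintype κ] (x : κ → E), N < Fintype.card κ → (∀ i, x i ∈ S) →
      ∃ i j, i ≠ j ∧ midpoint ℝ (x i) (x j) ∈ S)
    {ι : Type u} {F : ι → Set E} (hF : ∀ i, Convex ℝ (F i))
    (hFN : ∀ G : Finset ι, G.card = N → ∃ p ∈ S, ∀ i ∈ G, p ∈ F i)
    (G : Finset ι) (hG : N ≤ G.card) : ∃ p ∈ S, ∀ i ∈ G, p ∈ F i := by
  classical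
  induction G using Finset.strongInduction with
  | H G ih =>
  rcases hG.eq_or_lt with hG | hG
  · exact hFN G hG.symm
  have hx : ∀ i : G, ∃ p ∈ S, ∀ j ∈ G.erase i, p ∈ F j := fun i =>
    ih _ (Finset.erase_ssubset i.2) (by rw [Finset.card_erase_of_mem i.2]; omega)
  choose x hxS hxF using hx
  obtain ⟨p, hp, hpF⟩ := exists_mem_convexHull_forall_mem_of_midpoint_mem hfin
    (fun x hx => hmid G x (by simpa using hG) hx) (fun i : G => hF i) hxS
    (fun a b hab => hxF a b (Finset.mem_erase.2 ⟨fun h => hab (Subtype.ext h).symm, b.2⟩))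
  exact ⟨p, hp.1, fun i hi => hpF ⟨i, hi⟩⟩

section Crystal

variable {E : Type*} [AddCommGroup E] [Module ℝ E] {κ ι : Type*} [Fintype κ]

def crystal (b : κ → E) (t : ι → E) : Set E :=
  {x | ∃ i, ∃ c : κ → ℤ, x = ∑ j, (c j : ℝ) • b j + t i}

lemma midpoint_mem_crystal (b : κ → E) (t : ι → E) {c c' : κ → ℤ}
    (hcc' : ∀ j, c j ≡ c' j [ZMOD 2]) (i : ι) :
    midpoint ℝ (∑ j, (c j : ℝ) • b j + t i) (∑ j, (c' j : ℝ) • b j + t i) ∈ crystal b t := by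
  choose e he using fun j => Int.modEq_iff_dvd.1 (hcc' j)
  have hc' : ∑ j, (c' j : ℝ) • b j = ∑ j, (c j : ℝ) • b j + (2 : ℝ) • ∑ j, (e j : ℝ) • b j := by
    simp only [Finset.smul_sum, ← Finset.sum_add_distrib, smul_smul, ← add_smul]
    refine Finset.sum_congr rfl fun j _ => ?_
    rw [eq_add_of_sub_eq' (he j)]
    push_cast
    module
  refine ⟨i, c + e, ?_⟩
  simp only [hc', midpoint_eq_smul_add, invOf_eq_inv, Pi.add_apply, Int.cast_add, add_smul,
    Finset.sum_add_distrib]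
  module

lemma exists_ne_midpoint_mem_crystal [Fintype ι] {α : Type*} [Fintype α] (b : κ → E)
    (t : ι → E) (x : α → E) (hcard : Fintype.card ι * 2 ^ Fintype.card κ < Fintype.card α)
    (hx : ∀ a, x a ∈ crystal b t) : ∃ a a', a ≠ a' ∧ midpoint ℝ (x a) (x a') ∈ crystal b t := by
  classical
  choose r c hrc using hx
  obtain ⟨a, a', hne, heq⟩ := Fintype.exists_ne_map_eq_of_card_lt
    (fun a => (r a, fun j => (c a j : ZMod 2))) (by simpa [ZMod.card] using hcard)
  simp only [Prod.mk.injEq, funext_iff] at heq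
  refine ⟨a, a', hne, ?_⟩
  rw [hrc a, hrc a', heq.1]
  exact midpoint_mem_crystal b t (fun j => (ZMod.intCast_eq_intCast_iff _ _ 2).1 (heq.2 j)) _

lemma crystal_inter_finite {E : Type*} [NormedAddCommGroup E] [NormedSpace ℝ E] [Finite ι]
    (b : Module.Basis κ ℝ E) (t : ι → E) {K : Set E} (hK : Bornology.IsBounded K) :
    (crystal b t ∩ K).Finite := by
  have : FiniteDimensional ℝ E := b.finiteDimensional_of_finite
  refine (finite_iUnion fun i => ((ZSpan.setFinite_inter b (hK.vadd (-t i))).image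
    (· + t i))).subset ?_
  rintro _ ⟨⟨i, c, rfl⟩, hxK⟩
  refine mem_iUnion.2 ⟨i, ∑ j, (c j : ℝ) • b j, ⟨⟨_, hxK, by simp⟩, ?_⟩, rfl⟩
  exact Submodule.sum_mem _ fun j _ => by
    rw [Int.cast_smul_eq_zsmul]
    exact zsmul_mem (Submodule.subset_span (mem_range_self j)) _

end Crystal

theorem crystal_helly_general (d k : ℕ)
    (b : Module.Basis (Fin d) ℝ (Fin d → ℝ))
    (Λ : Set (Fin d → ℝ))
    (hΛ : Λ = {x | ∃ c : Fin d → ℤ, x = ∑ i, (c i : ℝ) • b i})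
    (t : Fin k → (Fin d → ℝ))
    (S : Set (Fin d → ℝ))
    (hS : S = {x | ∃ i : Fin k, ∃ l ∈ Λ, x = l + t i})
    (ι : Type) [Fintype ι] (F : ι → Set (Fin d → ℝ))
    (hFconv : ∀ i, Convex ℝ (F i))
    (hFcard : k * 2 ^ d ≤ Fintype.card ι)
    (hF : ∀ G : Finset ι, G.card = k * 2 ^ d → ∃ p ∈ S, ∀ i ∈ G, p ∈ F i) :
    ∃ p ∈ S, ∀ i, p ∈ F i := by
  have hS_crystal : S = crystal b t := by
    subst hS hΛ
    ext x
    constructor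
    · rintro ⟨i, _, ⟨c, rfl⟩, rfl⟩
      exact ⟨i, c, rfl⟩
    · rintro ⟨i, c, rfl⟩
      exact ⟨i, _, ⟨c, rfl⟩, rfl⟩
  subst hS_crystal
  obtain ⟨p, hp, hpF⟩ := helly_of_midpoint_mem
    (fun T hT => crystal_inter_finite b t (hT.isCompact_convexHull ℝ).isBounded)
    (fun κ _ x hκ hx => exists_ne_midpoint_mem_crystal b t x (by simpa using hκ) hx)
    hFconv hF Finset.univ (by simpa using hFcard)
  exact ⟨p, hp, fun i => hpF i (Finset.mem_univ i)⟩

/-- Helly number of a `d`-dimensional `k`-crystal is at most `k * 2^d`. -/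
theorem crystal_helly (d k : ℕ) (hd : 1 ≤ d) (hk : 1 ≤ k)
    (b : Module.Basis (Fin d) ℝ (Fin d → ℝ))
    (Λ : Set (Fin d → ℝ))
    (hΛ : Λ = {x | ∃ c : Fin d → ℤ, x = ∑ i, (c i : ℝ) • b i})
    (t : Fin k → (Fin d → ℝ))
    (ht : ∀ i j, i ≠ j → t i - t j ∉ Λ)
    (S : Set (Fin d → ℝ))
    (hS : S = {x | ∃ i : Fin k, ∃ l ∈ Λ, x = l + t i})
    (ι : Type) [Fintype ι] (F : ι → Set (Fin d → ℝ))
    (hFconv : ∀ i, Convex ℝ (F i))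
    (hFcard : k * 2 ^ d ≤ Fintype.card ι)
    (hF : ∀ G : Finset ι, G.card = k * 2 ^ d → ∃ p ∈ S, ∀ i ∈ G, p ∈ F i) :
    ∃ p ∈ S, ∀ i, p ∈ F i :=
  crystal_helly_general d k b Λ hΛ t S hS ι F hFconv hFcard hF
end

section
/- Let S₁, S₂ ⊆ ℝ^d, and let n₁, n₂ be positive integers such that Sᵢ has Helly number at most nᵢ for i = 1, 2. Then S₁ ∪ S₂ has Helly number at most n₁ + n₂; that is, for every finite family F of convex subsets of ℝ^d with at least n₁ + n₂ members, if every n₁ + n₂ members of F have a common point belonging to S₁ ∪ S₂, then all members of F have a common point belonging to S₁ ∪ S₂. -/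
/-- `S` has Helly number at most `n`: every finite family of at least `n` convex sets,
any `n` of which meet in a point of `S`, has a common point in `S`. -/
def HellyNumberLE (d : ℕ) (S : Set (Fin d → ℝ)) (n : ℕ) : Prop :=
  ∀ (ι : Type) [Fintype ι], ∀ F : ι → Set (Fin d → ℝ),
    (∀ i, Convex ℝ (F i)) → n ≤ Fintype.card ι →
    (∀ G : Finset ι, G.card = n → ∃ p ∈ S, ∀ i ∈ G, p ∈ F i) →
    ∃ p ∈ S, ∀ i, p ∈ F i

/-!
If some `n₁` members of the family have no common point in `S₁` and some `n₂` members have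
no common point in `S₂`, enlarge their union to `n₁ + n₂` members: a common point of these
in `S₁ ∪ S₂` is impossible. Hence the `(n₁ + n₂)`-condition for `S₁ ∪ S₂` forces the
`n₁`-condition for `S₁` or the `n₂`-condition for `S₂`, and the Helly number of `S₁` or of
`S₂` gives a common point of the whole family.
-/

section Piercing

variable {α ι : Type*} {S S₁ S₂ : Set α} {F : ι → Set α} {n n₁ n₂ : ℕ}

def PiercesSubfamilies (S : Set α) (F : ι → Set α) (n : ℕ) : Prop :=
  ∀ G : Finset ι, G.card = n → ∃ p ∈ S, ∀ i ∈ G, p ∈ F i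

theorem PiercesSubfamilies.exists_of_card_le [Fintype ι] (h : PiercesSubfamilies S F n)
    (hn : n ≤ Fintype.card ι) {G : Finset ι} (hG : G.card ≤ n) :
    ∃ p ∈ S, ∀ i ∈ G, p ∈ F i := by
  obtain ⟨H, hGH, hH⟩ := Finset.exists_superset_card_eq hG hn
  obtain ⟨p, hpS, hpH⟩ := h H hH
  exact ⟨p, hpS, fun i hi => hpH i (hGH hi)⟩

theorem PiercesSubfamilies.or_of_union [Fintype ι]
    (h : PiercesSubfamilies (S₁ ∪ S₂) F (n₁ + n₂)) (hn : n₁ + n₂ ≤ Fintype.card ι) :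
    PiercesSubfamilies S₁ F n₁ ∨ PiercesSubfamilies S₂ F n₂ := by
  classical
  by_contra! hnot
  unfold PiercesSubfamilies at hnot
  push Not at hnot
  obtain ⟨⟨G₁, hG₁, hG₁S⟩, ⟨G₂, hG₂, hG₂S⟩⟩ := hnot
  have hcard : (G₁ ∪ G₂).card ≤ n₁ + n₂ :=
    (Finset.card_union_le _ _).trans (by rw [hG₁, hG₂])
  obtain ⟨p, hpS, hpG⟩ := h.exists_of_card_le hn hcard
  rcases hpS with hp | hp
  · obtain ⟨i, hi, hpi⟩ := hG₁S p hp
    exact hpi (hpG i (Finset.mem_union_left _ hi))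
  · obtain ⟨i, hi, hpi⟩ := hG₂S p hp
    exact hpi (hpG i (Finset.mem_union_right _ hi))

end Piercing

theorem helly_number_union_general (d : ℕ) (S₁ S₂ : Set (Fin d → ℝ)) (n₁ n₂ : ℕ)
    (h₁ : HellyNumberLE d S₁ n₁) (h₂ : HellyNumberLE d S₂ n₂) :
    HellyNumberLE d (S₁ ∪ S₂) (n₁ + n₂) := by
  intro ι _ F hconv hcard hpierce
  rcases PiercesSubfamilies.or_of_union hpierce hcard with hS₁ | hS₂
  · obtain ⟨p, hp, hpF⟩ := h₁ ι F hconv (le_of_add_le_left hcard) hS₁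
    exact ⟨p, Or.inl hp, hpF⟩
  · obtain ⟨p, hp, hpF⟩ := h₂ ι F hconv (le_of_add_le_right hcard) hS₂
    exact ⟨p, Or.inr hp, hpF⟩

/-- The Helly number of a union of two sets is at most the sum of their Helly numbers. -/
theorem helly_number_union (d : ℕ) (S₁ S₂ : Set (Fin d → ℝ)) (n₁ n₂ : ℕ)
    (hn₁ : 0 < n₁) (hn₂ : 0 < n₂)
    (h₁ : HellyNumberLE d S₁ n₁) (h₂ : HellyNumberLE d S₂ n₂) :
    HellyNumberLE d (S₁ ∪ S₂) (n₁ + n₂) :=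
  helly_number_union_general d S₁ S₂ n₁ n₂ h₁ h₂
end

section
/- Let A, B, C, D be four points of ℝ² in convex position (each one is a vertex of the convex hull of {A, B, C, D}). Then either ABCD is a parallelogram, or there exist three distinct points P, Q, R among {A, B, C, D} such that the point M = P + R − Q lies in the convex hull of {A, B, C, D} and P, Q, R, M are the vertices of a parallelogram (i.e. PQRM is a nondegenerate parallelogram contained in the quadrilateral). -/
/-!
Four points in convex position in the plane are affinely dependent, so by Radon's theorem they
split into two parts whose convex hulls meet, and convex position forces both parts to be pairs:
the diagonals `PR` and `QS` cross at a point `O = a P + b R = c Q + d S` with `a + b = c + d = 1`.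
If `c` is the largest of the four weights, then `c (P + R - Q) = (c - a) P + (c - b) R + d S`
exhibits `P + R - Q` as a convex combination of vertices; the other three cases are symmetric.
-/

open Module

variable {ι 𝕜 E : Type*} [AddCommGroup E]

lemma Set.ncard_eq_two_of_nontrivial_of_card_eq_four [Finite ι] (hcard : Nat.card ι = 4)
    {I : Set ι} (hI : I.Nontrivial) (hIc : Iᶜ.Nontrivial) : I.ncard = 2 := by
  have := Set.ncard_add_ncard_compl I
  have := Set.one_lt_ncard_iff_nontrivial.2 hI
  have := Set.one_lt_ncard_iff_nontrivial.2 hIc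
  omega

lemma not_affineIndependent_of_finrank_add_one_lt_card [DivisionRing 𝕜] [Module 𝕜 E]
    [FiniteDimensional 𝕜 E] [Finite ι] {p : ι → E} (h : finrank 𝕜 E + 1 < Nat.card ι) :
    ¬AffineIndependent 𝕜 p := by
  have := Fintype.ofFinite ι
  intro hp
  rw [Nat.card_eq_fintype_card] at h
  exact h.not_ge (hp.card_le_finrank_succ.trans (by gcongr; exact Submodule.finrank_le _))

lemma ConvexIndependent.nontrivial_of_convexHull_inter_nonempty [Semiring 𝕜] [PartialOrder 𝕜]
    [Module 𝕜 E] {p : ι → E} (hp : ConvexIndependent 𝕜 p) {I : Set ι}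
    (h : (convexHull 𝕜 (p '' I) ∩ convexHull 𝕜 (p '' Iᶜ)).Nonempty) : I.Nontrivial := by
  obtain ⟨x, hxI, hxIc⟩ := h
  rw [← Set.not_subsingleton_iff]
  intro hI
  rcases hI.eq_empty_or_singleton with rfl | ⟨i, rfl⟩
  · simp at hxI
  · rw [Set.image_singleton, convexHull_singleton, Set.mem_singleton_iff] at hxI
    subst hxI
    exact hp _ _ hxIc rfl

variable [Field 𝕜] [LinearOrder 𝕜] [IsStrictOrderedRing 𝕜] [Module 𝕜 E]

lemma ConvexIndependent.not_collinear {p : ι → E} (hp : ConvexIndependent 𝕜 p) {i j k : ι}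
    (hij : i ≠ j) (hjk : j ≠ k) (hik : i ≠ k) : ¬Collinear 𝕜 {p i, p j, p k} := by
  have not_wbtw : ∀ {i j k : ι}, j ≠ i → j ≠ k → ¬Wbtw 𝕜 (p i) (p j) (p k) := by
    intro i j k hji hjk h
    have := hp {i, k} j (by rw [Set.image_pair, convexHull_pair]; exact h.mem_segment)
    simp_all
  intro h
  rcases h.wbtw_or_wbtw_or_wbtw with h | h | h
  · exact not_wbtw hij.symm hjk h
  · exact not_wbtw hjk.symm hik.symm h
  · exact not_wbtw hik hij h

lemma mem_convexHull_of_smul_eq_smul_add_smul_add_smul {s : Set E} {m x y z : E}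
    (hx : x ∈ s) (hy : y ∈ s) (hz : z ∈ s) {a b c : 𝕜} (ha : 0 ≤ a) (hb : 0 ≤ b) (hc : 0 ≤ c)
    (habc : 0 < a + b + c) (h : (a + b + c) • m = a • x + b • y + c • z) :
    m ∈ convexHull 𝕜 s := by
  have hmem := Finset.centerMass_mem_convexHull (t := Finset.univ) (w := ![a, b, c])
    (z := ![x, y, z]) (s := s) (by simp [Fin.forall_fin_succ, ha, hb, hc])
    (by simpa [Fin.sum_univ_three] using habc) (by simp [Fin.forall_fin_succ, hx, hy, hz])
  simpa [Finset.centerMass, Fin.sum_univ_three, ← h, smul_smul, habc.ne'] using hmem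

lemma add_sub_mem_convexHull_of_le {s : Set E} {P Q R S : E} (hP : P ∈ s) (hR : R ∈ s)
    (hS : S ∈ s) {a b c d : 𝕜} (hac : a ≤ c) (hbc : b ≤ c) (hd : 0 ≤ d) (hc : 0 < c)
    (hsum : a + b = c + d) (hrel : a • P + b • R = c • Q + d • S) :
    P + R - Q ∈ convexHull 𝕜 s :=
  mem_convexHull_of_smul_eq_smul_add_smul_add_smul hP hR hS (sub_nonneg.2 hac)
    (sub_nonneg.2 hbc) hd (by linarith) (by
      rw [show c - a + (c - b) + d = c by linarith]
      linear_combination (norm := module) hrel)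

lemma add_sub_mem_convexHull_of_mem_segment {s : Set E} {P Q R S O : E} (hP : P ∈ s)
    (hQ : Q ∈ s) (hR : R ∈ s) (hS : S ∈ s) (hPR : O ∈ segment 𝕜 P R) (hQS : O ∈ segment 𝕜 Q S) :
    P + R - Q ∈ convexHull 𝕜 s ∨ P + R - S ∈ convexHull 𝕜 s ∨
      Q + S - P ∈ convexHull 𝕜 s ∨ Q + S - R ∈ convexHull 𝕜 s := by
  obtain ⟨a, b, ha, hb, hab, rfl⟩ := hPR
  obtain ⟨c, d, hc, hd, hcd, hrel⟩ := hQS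
  rcases le_total (max a b) (max c d) with h | h
  · rcases le_total c d with hcd' | hcd'
    · rw [max_eq_right hcd', max_le_iff] at h
      exact Or.inr <| Or.inl <| add_sub_mem_convexHull_of_le hP hR hQ h.1 h.2 hc (by linarith)
        (by linarith) (by rw [← hrel, add_comm])
    · rw [max_eq_left hcd', max_le_iff] at h
      exact Or.inl <| add_sub_mem_convexHull_of_le hP hR hS h.1 h.2 hd (by linarith)
        (by linarith) hrel.symm
  · rcases le_total a b with hab' | hab'
    · rw [max_eq_right hab', max_le_iff] at h
      exact Or.inr <| Or.inr <| Or.inr <| add_sub_mem_convexHull_of_le hQ hS hP h.1 h.2 ha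
        (by linarith) (by linarith) (by rw [hrel, add_comm])
    · rw [max_eq_left hab', max_le_iff] at h
      exact Or.inr <| Or.inr <| Or.inl <| add_sub_mem_convexHull_of_le hQ hS hR h.1 h.2 hb
        (by linarith) (by linarith) hrel

theorem ConvexIndependent.exists_add_sub_mem_convexHull [Finite ι] {p : ι → E}
    (hp : ConvexIndependent 𝕜 p) (hdep : ¬AffineIndependent 𝕜 p) (hcard : Nat.card ι = 4) :
    ∃ i j k, i ≠ j ∧ j ≠ k ∧ i ≠ k ∧ p i + p k - p j ∈ convexHull 𝕜 (Set.range p) := by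
  obtain ⟨I, O, hOI, hOIc⟩ := Convex.radon_partition hdep
  have hI := hp.nontrivial_of_convexHull_inter_nonempty ⟨O, hOI, hOIc⟩
  have hIc := hp.nontrivial_of_convexHull_inter_nonempty (I := Iᶜ)
    ⟨O, hOIc, by rwa [compl_compl]⟩
  obtain ⟨i, k, hik, rfl⟩ := Set.ncard_eq_two.1
    (Set.ncard_eq_two_of_nontrivial_of_card_eq_four hcard hI hIc)
  obtain ⟨j, l, hjl, hIc_eq⟩ := Set.ncard_eq_two.1
    (Set.ncard_eq_two_of_nontrivial_of_card_eq_four hcard hIc (by rwa [compl_compl]))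
  have hj : j ∉ ({i, k} : Set ι) := by rw [← Set.mem_compl_iff, hIc_eq]; simp
  have hl : l ∉ ({i, k} : Set ι) := by rw [← Set.mem_compl_iff, hIc_eq]; simp
  simp only [Set.mem_insert_iff, Set.mem_singleton_iff, not_or] at hj hl
  rw [Set.image_pair, convexHull_pair] at hOI
  rw [hIc_eq, Set.image_pair, convexHull_pair] at hOIc
  rcases add_sub_mem_convexHull_of_mem_segment (Set.mem_range_self i) (Set.mem_range_self j)
    (Set.mem_range_self k) (Set.mem_range_self l) hOI hOIc with h | h | h | h
  · exact ⟨i, j, k, Ne.symm hj.1, hj.2, hik, h⟩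
  · exact ⟨i, l, k, Ne.symm hl.1, hl.2, hik, h⟩
  · exact ⟨j, i, l, hj.1, Ne.symm hl.1, hjl, h⟩
  · exact ⟨j, k, l, hj.2, Ne.symm hl.2, hjl, h⟩

/-- Every convex quadrilateral is a parallelogram or contains a parallelogram three of whose
vertices are vertices of the quadrilateral. -/
theorem quadrilateral_contains_parallelogram (A B C D : ℝ × ℝ)
    (hA : A ∉ convexHull ℝ ({B, C, D} : Set (ℝ × ℝ)))
    (hB : B ∉ convexHull ℝ ({A, C, D} : Set (ℝ × ℝ)))
    (hC : C ∉ convexHull ℝ ({A, B, D} : Set (ℝ × ℝ)))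
    (hD : D ∉ convexHull ℝ ({A, B, C} : Set (ℝ × ℝ))) :
    (A + C = B + D ∨ A + B = C + D ∨ A + D = B + C) ∨
    ∃ P Q R : ℝ × ℝ, P ∈ ({A, B, C, D} : Set (ℝ × ℝ)) ∧
      Q ∈ ({A, B, C, D} : Set (ℝ × ℝ)) ∧ R ∈ ({A, B, C, D} : Set (ℝ × ℝ)) ∧
      P ≠ Q ∧ Q ≠ R ∧ P ≠ R ∧
      P + R - Q ∈ convexHull ℝ ({A, B, C, D} : Set (ℝ × ℝ)) ∧
      ¬ Collinear ℝ ({P, Q, R} : Set (ℝ × ℝ)) := by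
  set s : Set (ℝ × ℝ) := {A, B, C, D}
  have hconv : ConvexIndependent ℝ ((↑) : s → ℝ × ℝ) := by
    refine convexIndependent_set_iff_notMem_convexHull_sdiff.2 ?_
    rintro x (rfl | rfl | rfl | rfl) hx
    · exact hA (convexHull_mono (by simp [s, Set.insert_subset_iff]) hx)
    · exact hB (convexHull_mono (by simp [s, Set.insert_subset_iff]) hx)
    · exact hC (convexHull_mono (by simp [s, Set.insert_subset_iff]) hx)
    · exact hD (convexHull_mono (by simp [s]) hx)
  have hcard : Nat.card s = 4 := by
    rw [Nat.card_coe_set_eq, Set.ncard_insert_of_notMem, Set.ncard_insert_of_notMem,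
      Set.ncard_pair]
    · exact fun h => hC (subset_convexHull ℝ _ (by simp [h]))
    · exact fun h => hB (subset_convexHull ℝ _ (by simp_all))
    · exact fun h => hA (subset_convexHull ℝ _ h)
  obtain ⟨P, Q, R, hPQ, hQR, hPR, hM⟩ := hconv.exists_add_sub_mem_convexHull
    (not_affineIndependent_of_finrank_add_one_lt_card (by rw [hcard]; simp)) hcard
  rw [Subtype.range_coe] at hM
  exact Or.inr ⟨P, Q, R, P.2, Q.2, R.2, Subtype.coe_injective.ne hPQ,
    Subtype.coe_injective.ne hQR, Subtype.coe_injective.ne hPR, hM, hconv.not_collinear hPQ hQR hPR⟩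
end

section
/- Let X, X', Y, Y', Z, Z' be points of ℝ² such that X' − X = Y' − Y = Z' − Z = v for some nonzero vector v (i.e. the segments XX', YY', ZZ' are equal and parallel). Then at least one of the six points X, Y, Z, X', Y', Z' lies in the convex hull of the remaining five points. -/
/-!
Project along `v` with the linear form `w ↦ v × w`, whose kernel is the line `ℝ v`. One of
`X, Y, Z`, say `Y`, projects between the other two, so `Y = P + s v` for a point `P` of the segment `XZ`.
If `s ≥ 0` then `Y` lies on the segment from `P` to `Y' = P + (s + 1) v`, hence in the hull of
`X, Z, Y'`; if `s ≤ 0` then `Y'` lies on the segment from `Y` to `P + v`, hence in the hull of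
`Y, X', Z'`.
-/

open Set

theorem mem_uIcc_or_mem_uIcc_or_mem_uIcc {α : Type*} [LinearOrder α] (a b c : α) :
    b ∈ uIcc a c ∨ a ∈ uIcc b c ∨ c ∈ uIcc a b := by
  simp only [mem_uIcc]
  rcases le_total a b with h₁ | h₁ <;> rcases le_total b c with h₂ | h₂ <;>
    rcases le_total a c with h₃ | h₃ <;> simp [*]

section Segment

variable {𝕜 E : Type*} [Field 𝕜] [LinearOrder 𝕜] [IsStrictOrderedRing 𝕜] [AddCommGroup E]
  [Module 𝕜 E]

theorem mem_convexHull_or_add_mem_convexHull {X Y Z P v : E} (hP : P ∈ segment 𝕜 X Z)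
    (hYP : Y - P ∈ 𝕜 ∙ v) :
    Y ∈ convexHull 𝕜 {X, Z, Y + v} ∨ Y + v ∈ convexHull 𝕜 {Y, X + v, Z + v} := by
  obtain ⟨s, hs⟩ := Submodule.mem_span_singleton.mp hYP
  rcases le_total 0 s with hs₀ | hs₀
  · left
    have hY : Y ∈ segment 𝕜 P (Y + v) := mem_segment_iff_sameRay.2 <| by
      rw [← hs, add_sub_cancel_left]
      exact SameRay.sameRay_nonneg_smul_left v hs₀
    refine (convex_convexHull 𝕜 _).segment_subset ?_ (subset_convexHull 𝕜 _ (by simp)) hY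
    exact segment_subset_convexHull (by simp) (by simp) hP
  · right
    have hPv : P + v ∈ segment 𝕜 (X + v) (Z + v) := by
      simpa only [add_comm v] using (mem_segment_translate 𝕜 v).2 hP
    have hYv : Y + v ∈ segment 𝕜 Y (P + v) := mem_segment_iff_sameRay.2 <| by
      rw [add_sub_cancel_left, add_sub_add_right_eq_sub, ← neg_sub, ← hs, ← neg_smul]
      exact SameRay.sameRay_nonneg_smul_right v (neg_nonneg.2 hs₀)
    refine (convex_convexHull 𝕜 _).segment_subset (subset_convexHull 𝕜 _ (by simp)) ?_ hYv
    exact segment_subset_convexHull (by simp) (by simp) hPv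

end Segment

def crossWith (v : ℝ × ℝ) : ℝ × ℝ →ₗ[ℝ] ℝ :=
  v.2 • LinearMap.fst ℝ ℝ ℝ - v.1 • LinearMap.snd ℝ ℝ ℝ

@[simp]
theorem crossWith_apply (v w : ℝ × ℝ) : crossWith v w = v.2 * w.1 - v.1 * w.2 := rfl

theorem mem_span_singleton_of_crossWith_eq_zero {v w : ℝ × ℝ} (hv : v ≠ 0)
    (h : crossWith v w = 0) : w ∈ ℝ ∙ v := by
  rw [crossWith_apply] at h
  rw [Submodule.mem_span_singleton]
  by_cases h₁ : v.1 = 0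
  · have h₂ : v.2 ≠ 0 := fun h₂ => hv (Prod.ext h₁ h₂)
    refine ⟨w.2 / v.2, Prod.ext ?_ ?_⟩
    · simp_all
    · simp [h₂]
  · refine ⟨w.1 / v.1, Prod.ext ?_ ?_⟩
    · simp [h₁]
    · simp only [Prod.smul_snd, smul_eq_mul]
      field_simp
      linarith

theorem mem_convexHull_or_add_mem_convexHull_of_crossWith_mem_uIcc {X Y Z v : ℝ × ℝ} (hv : v ≠ 0)
    (h : crossWith v Y ∈ uIcc (crossWith v X) (crossWith v Z)) :
    Y ∈ convexHull ℝ {X, Z, Y + v} ∨ Y + v ∈ convexHull ℝ {Y, X + v, Z + v} := by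
  rw [← segment_eq_uIcc, ← LinearMap.coe_toAffineMap, ← image_segment] at h
  obtain ⟨P, hP, hPY⟩ := h
  refine mem_convexHull_or_add_mem_convexHull hP (mem_span_singleton_of_crossWith_eq_zero hv ?_)
  rw [map_sub, sub_eq_zero]
  exact hPY.symm

/-- Given three equal and parallel segments `XX'`, `YY'`, `ZZ'` in the plane, one of the six
endpoints lies in the convex hull of the remaining five. -/
theorem three_parallel_segments (X X' Y Y' Z Z' v : ℝ × ℝ) (hv : v ≠ 0)
    (hX : X' - X = v) (hY : Y' - Y = v) (hZ : Z' - Z = v) :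
    X ∈ convexHull ℝ ({Y, Z, X', Y', Z'} : Set (ℝ × ℝ)) ∨
    Y ∈ convexHull ℝ ({X, Z, X', Y', Z'} : Set (ℝ × ℝ)) ∨
    Z ∈ convexHull ℝ ({X, Y, X', Y', Z'} : Set (ℝ × ℝ)) ∨
    X' ∈ convexHull ℝ ({X, Y, Z, Y', Z'} : Set (ℝ × ℝ)) ∨
    Y' ∈ convexHull ℝ ({X, Y, Z, X', Z'} : Set (ℝ × ℝ)) ∨
    Z' ∈ convexHull ℝ ({X, Y, Z, X', Y'} : Set (ℝ × ℝ)) := by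
  obtain rfl : X' = X + v := eq_add_of_sub_eq' hX
  obtain rfl : Y' = Y + v := eq_add_of_sub_eq' hY
  obtain rfl : Z' = Z + v := eq_add_of_sub_eq' hZ
  rcases mem_uIcc_or_mem_uIcc_or_mem_uIcc (crossWith v X) (crossWith v Y) (crossWith v Z)
    with h | h | h
  · rcases mem_convexHull_or_add_mem_convexHull_of_crossWith_mem_uIcc hv h with h | h
    · refine Or.inr <| Or.inl <| convexHull_mono ?_ h
      simp [insert_subset_iff]
    · refine Or.inr <| Or.inr <| Or.inr <| Or.inr <| Or.inl <| convexHull_mono ?_ h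
      simp [insert_subset_iff]
  · rcases mem_convexHull_or_add_mem_convexHull_of_crossWith_mem_uIcc hv h with h | h
    · refine Or.inl <| convexHull_mono ?_ h
      simp [insert_subset_iff]
    · refine Or.inr <| Or.inr <| Or.inr <| Or.inl <| convexHull_mono ?_ h
      simp [insert_subset_iff]
  · rcases mem_convexHull_or_add_mem_convexHull_of_crossWith_mem_uIcc hv h with h | h
    · refine Or.inr <| Or.inr <| Or.inl <| convexHull_mono ?_ h
      simp [insert_subset_iff]
    · refine Or.inr <| Or.inr <| Or.inr <| Or.inr <| Or.inr <| convexHull_mono ?_ h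
      simp [insert_subset_iff]
end

section
/- There do not exist four vectors v₁, v₂, v₃, v₄ ∈ ℤ² such that every pair {vᵢ, vⱼ} with i ≠ j forms a basis of the lattice ℤ², i.e. such that |det(vᵢ, vⱼ)| = 1 for all 1 ≤ i < j ≤ 4. -/
/-!
Reduce modulo 2. A determinant `±1` becomes `1` in `ZMod 2`, so the four reduced vectors
would have pairwise determinant `1` over `ZMod 2`. Such vectors are nonzero and pairwise
distinct (a vector has determinant `0` with itself and with `0`), but `(ZMod 2)²` has only
three nonzero vectors.
-/

section Det2

variable {R S : Type*} [CommRing R] [CommRing S]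

def det2 (u w : R × R) : R := u.1 * w.2 - u.2 * w.1

@[simp]
theorem det2_self (u : R × R) : det2 u u = 0 := by
  simp only [det2]; ring

@[simp]
theorem det2_zero_left (w : R × R) : det2 0 w = 0 := by
  simp [det2]

theorem map_det2 (f : R →+* S) (u w : R × R) :
    det2 (Prod.map f f u) (Prod.map f f w) = f (det2 u w) := by
  simp [det2]

theorem card_le_of_pairwise_det2_eq_one {ι : Type*} [Fintype ι] [Nontrivial ι] [Fintype R]
    [Nontrivial R] (v : ι → R × R) (hv : ∀ i j, i ≠ j → det2 (v i) (v j) = 1) :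
    Fintype.card ι ≤ Fintype.card (R × R) - 1 := by
  classical
  have hne : ∀ i, v i ≠ 0 := fun i hi => by
    obtain ⟨j, hji⟩ := exists_ne i
    simpa [hi] using hv i j hji.symm
  have hinj : Function.Injective fun i => (⟨v i, hne i⟩ : {x : R × R // x ≠ 0}) :=
    fun i j hij => by_contra fun h => by
      have hvij : v i = v j := congrArg Subtype.val hij
      simpa [hvij] using hv i j h
  simpa using Fintype.card_le_of_injective _ hinj

end Det2

/-- There are no four vectors in `ℤ²` every pair of which forms a basis of `ℤ²`. -/
theorem no_four_pairwise_unimodular_vectors :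
    ¬ ∃ v : Fin 4 → ℤ × ℤ, ∀ i j, i ≠ j →
      ((v i).1 * (v j).2 - (v i).2 * (v j).1 = 1 ∨
       (v i).1 * (v j).2 - (v i).2 * (v j).1 = -1) := by
  rintro ⟨v, hv⟩
  let f := Int.castRingHom (ZMod 2)
  have hmod2 : ∀ i j, i ≠ j → det2 (Prod.map f f (v i)) (Prod.map f f (v j)) = 1 := by
    intro i j hij
    rw [map_det2, det2]
    rcases hv i j hij with h | h
    · rw [h, map_one]
    · rw [h, map_neg, map_one]
      decide
  have := card_le_of_pairwise_det2_eq_one _ hmod2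
  simp at this
end

section
/- Let A, B, C, D ∈ ℤ² be four points in convex position (each a vertex of the convex hull of {A,B,C,D}, listed in cyclic order) such that the convex hull of {A,B,C,D} contains no point of ℤ² other than A, B, C, D. Then ABCD is a parallelogram, and moreover it is a fundamental parallelogram of ℤ² (its area equals 1, i.e. the edge vectors at any vertex form a basis of ℤ²). -/
/-- The canonical embedding of the integer lattice `ℤ²` into the plane `ℝ²`. -/
def intPairToR2 (z : ℤ × ℤ) : ℝ × ℝ := ((z.1 : ℝ), (z.2 : ℝ))

/-!
A lattice triangle `0, u, v` with no lattice points besides its vertices has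
`wedge u v = ±1`: otherwise `u` and `v` span a proper sublattice of `ℤ²`, and reducing a lattice
point outside it modulo `u` and `v` gives a nonzero lattice point `p` of the half-open
parallelogram spanned by `u` and `v`; `p` or its reflection `u + v - p` is then a lattice point of
the triangle other than a vertex. Applied to the triangles
`ABC`, `ACD` and `ABD`, this makes the three wedges `±1`; since the diagonals `AC` and `BD` cross,
they all have the same sign, and the identity
`wedge w v • u + wedge u w • v = wedge u v • w` for `u = B - A`, `v = C - A`, `w = D - A`
then reads `B - A = C - D`.
-/

open Set

def wedge {R : Type*} [CommRing R] (u v : R × R) : R := u.1 * v.2 - u.2 * v.1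

section CommRing

variable {R : Type*} [CommRing R]

theorem wedge_anticomm (u v : R × R) : wedge v u = -wedge u v := by
  simp only [wedge]; ring

theorem wedge_smul_add_wedge_smul (u v w : R × R) :
    wedge w v • u + wedge u w • v = wedge u v • w := by
  ext <;> simp only [wedge, Prod.smul_fst, Prod.smul_snd, Prod.fst_add, Prod.snd_add,
    smul_eq_mul] <;> ring

end CommRing

section OrderedField

variable {𝕜 : Type*} [Field 𝕜] [LinearOrder 𝕜] [IsStrictOrderedRing 𝕜]

theorem add_smul_add_smul_mem_convexHull_triple {E : Type*} [AddCommGroup E] [Module 𝕜 E]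
    {x y z : E} {a b c : 𝕜} (ha : 0 ≤ a) (hb : 0 ≤ b) (hc : 0 ≤ c) (habc : a + b + c = 1) :
    a • x + b • y + c • z ∈ convexHull 𝕜 {x, y, z} := by
  have := (convex_convexHull 𝕜 {x, y, z}).sum_mem (t := Finset.univ) (w := ![a, b, c])
    (z := ![x, y, z]) (by simp [Fin.forall_fin_succ, ha, hb, hc])
    (by simpa [Fin.sum_univ_three] using habc)
    (fun i _ => subset_convexHull 𝕜 _ (by fin_cases i <;> simp))
  simpa [Fin.sum_univ_three] using this

theorem mem_convexHull_triple_of_wedge {x y z p : 𝕜 × 𝕜} (hd : 0 < wedge (y - x) (z - x))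
    (ha : 0 ≤ wedge (p - x) (z - x)) (hb : 0 ≤ wedge (y - x) (p - x))
    (hab : wedge (p - x) (z - x) + wedge (y - x) (p - x) ≤ wedge (y - x) (z - x)) :
    p ∈ convexHull 𝕜 {x, y, z} := by
  set d := wedge (y - x) (z - x)
  set a := wedge (p - x) (z - x)
  set b := wedge (y - x) (p - x)
  have hcramer : a • (y - x) + b • (z - x) = d • (p - x) := wedge_smul_add_wedge_smul _ _ _
  have hp : (1 - a / d - b / d) • x + (a / d) • y + (b / d) • z = p := by
    apply smul_right_injective (𝕜 × 𝕜) hd.ne'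
    simp only [smul_add, smul_smul, mul_sub, mul_one, mul_div_cancel₀ _ hd.ne']
    linear_combination (norm := module) hcramer
  rw [← hp]
  refine add_smul_add_smul_mem_convexHull_triple ?_ (by positivity) (by positivity) (by ring)
  rw [sub_sub, sub_nonneg, ← add_div, div_le_one hd]
  exact hab

theorem collinear_of_wedge_sub_eq_zero {x y z : 𝕜 × 𝕜} (h : wedge (y - x) (z - x) = 0) :
    Collinear 𝕜 {x, y, z} := by
  rw [collinear_iff_of_mem (p₀ := x) (by simp)]
  simp only [mem_insert_iff, mem_singleton_iff, forall_eq_or_imp, forall_eq]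
  by_cases hxy : y = x
  · exact ⟨z - x, ⟨0, by simp⟩, ⟨0, by simp [hxy]⟩, ⟨1, by simp⟩⟩
  set u := y - x
  have hn : u.1 ^ 2 + u.2 ^ 2 ≠ 0 := by
    intro h0
    rw [add_eq_zero_iff_of_nonneg (sq_nonneg _) (sq_nonneg _), sq_eq_zero_iff, sq_eq_zero_iff] at h0
    exact hxy (sub_eq_zero.1 (Prod.ext h0.1 h0.2))
  -- `z - x` is parallel to `u`, so it is its orthogonal projection onto `u`
  refine ⟨u, ⟨0, by simp⟩, ⟨1, by simp [u]⟩,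
    ⟨(u.1 * (z - x).1 + u.2 * (z - x).2) / (u.1 ^ 2 + u.2 ^ 2), ?_⟩⟩
  simp only [wedge, Prod.fst_sub, Prod.snd_sub] at h
  ext <;> simp only [vadd_eq_add, Prod.fst_add, Prod.snd_add, Prod.smul_fst, Prod.smul_snd,
    Prod.fst_sub, Prod.snd_sub, smul_eq_mul] <;> field_simp
  · linear_combination (-u.2) * h
  · linear_combination u.1 * h

theorem wedge_sub_ne_zero_of_notMem_segment {x y z : 𝕜 × 𝕜} (hx : x ∉ segment 𝕜 y z)
    (hy : y ∉ segment 𝕜 x z) (hz : z ∉ segment 𝕜 x y) : wedge (y - x) (z - x) ≠ 0 := fun h => by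
  rcases (collinear_of_wedge_sub_eq_zero h).wbtw_or_wbtw_or_wbtw with h | h | h
  · exact hy (mem_segment_iff_wbtw.2 h)
  · exact hz (mem_segment_iff_wbtw.2 h.symm)
  · exact hx (mem_segment_iff_wbtw.2 h.symm)

theorem wedge_mul_wedge_nonpos_of_segment_inter_nonempty {x y z w : 𝕜 × 𝕜}
    (h : (segment 𝕜 x z ∩ segment 𝕜 y w).Nonempty) :
    wedge (z - x) (y - x) * wedge (z - x) (w - x) ≤ 0 := by
  obtain ⟨p, ⟨a, b, -, -, hab, rfl⟩, c, e, hc, he, hce, hp⟩ := h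
  set Y := wedge (z - x) (y - x)
  set W := wedge (z - x) (w - x)
  -- `c * Y + e * W = wedge (z - x) (p - x)`, which vanishes as `p` lies on the line `xz`
  have hline : c * Y + e * W = 0 := by
    have h₁ := congrArg Prod.fst hp
    have h₂ := congrArg Prod.snd hp
    simp only [Prod.fst_add, Prod.snd_add, Prod.smul_fst, Prod.smul_snd, smul_eq_mul] at h₁ h₂
    simp only [Y, W, wedge, Prod.fst_sub, Prod.snd_sub]
    linear_combination (z.1 - x.1) * h₂ - (z.2 - x.2) * h₁
      + ((z.2 - x.2) * x.1 - (z.1 - x.1) * x.2) * hce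
      + ((z.1 - x.1) * x.2 - (z.2 - x.2) * x.1) * hab
  calc Y * W = (c + e) * (Y * W) := by rw [hce, one_mul]
    _ = -(c * Y ^ 2 + e * W ^ 2) := by linear_combination (Y + W) * hline
    _ ≤ 0 := neg_nonpos.2 (by positivity)

end OrderedField

theorem ConvexIndependent.notMem_segment {𝕜 E ι : Type*} [Semiring 𝕜] [PartialOrder 𝕜]
    [IsOrderedRing 𝕜] [AddCommGroup E] [Module 𝕜 E] {p : ι → E} (hp : ConvexIndependent 𝕜 p)
    {i j k : ι} (hij : i ≠ j) (hik : i ≠ k) : p i ∉ segment 𝕜 (p j) (p k) := by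
  rw [← convexHull_pair, ← image_pair, hp.mem_convexHull_iff]
  simp [hij, hik]

theorem convexIndependent_fin_four {𝕜 E : Type*} [Semiring 𝕜] [PartialOrder 𝕜]
    [AddCommGroup E] [Module 𝕜 E] {a b c d : E} (ha : a ∉ convexHull 𝕜 {b, c, d})
    (hb : b ∉ convexHull 𝕜 {a, c, d}) (hc : c ∉ convexHull 𝕜 {a, b, d})
    (hd : d ∉ convexHull 𝕜 {a, b, c}) : ConvexIndependent 𝕜 ![a, b, c, d] := by
  refine convexIndependent_iff_notMem_convexHull_sdiff.2 fun i s hi => ?_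
  fin_cases i <;> [refine ha ?_; refine hb ?_; refine hc ?_; refine hd ?_] <;>
    refine convexHull_mono ?_ hi <;> rintro _ ⟨l, hl, rfl⟩ <;> fin_cases l <;> simp_all

@[simp]
theorem intPairToR2_sub (u v : ℤ × ℤ) : intPairToR2 (u - v) = intPairToR2 u - intPairToR2 v := by
  ext <;> simp [intPairToR2]

@[simp]
theorem wedge_intPairToR2 (u v : ℤ × ℤ) :
    wedge (intPairToR2 u) (intPairToR2 v) = ((wedge u v : ℤ) : ℝ) := by
  simp [wedge, intPairToR2]

section Lattice

variable {u v : ℤ × ℤ}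

theorem wedge_dvd_one_of_forall_dvd (hd : wedge u v ≠ 0)
    (h : ∀ z, wedge u v ∣ wedge z v ∧ wedge u v ∣ wedge u z) : wedge u v ∣ 1 := by
  obtain ⟨hv₂, hu₂⟩ := h (1, 0)
  obtain ⟨hv₁, hu₁⟩ := h (0, 1)
  simp only [wedge, one_mul, zero_mul, sub_zero, zero_sub, mul_one, mul_zero, dvd_neg]
    at hv₂ hu₂ hv₁ hu₁
  have : wedge u v * wedge u v ∣ wedge u v * 1 := by
    rw [mul_one]
    exact dvd_sub (mul_dvd_mul hu₁ hv₂) (mul_dvd_mul hu₂ hv₁)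
  exact (mul_dvd_mul_iff_left hd).1 this

theorem exists_wedge_lt_of_one_lt_wedge (hd : 1 < wedge u v) :
    ∃ p, 0 ≤ wedge p v ∧ wedge p v < wedge u v ∧ 0 ≤ wedge u p ∧ wedge u p < wedge u v ∧
      0 < wedge p v + wedge u p := by
  set d := wedge u v
  obtain ⟨z, hz⟩ : ∃ z, ¬ (d ∣ wedge z v ∧ d ∣ wedge u z) := by
    by_contra! h
    have := Int.eq_one_of_dvd_one (by omega) (wedge_dvd_one_of_forall_dvd (by omega) h)
    omega
  refine ⟨z - (wedge z v / d) • u - (wedge u z / d) • v, ?_⟩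
  have hpv : wedge (z - (wedge z v / d) • u - (wedge u z / d) • v) v = wedge z v % d := by
    rw [Int.emod_def]; simp only [d, wedge, Prod.fst_sub, Prod.snd_sub, Prod.smul_fst,
      Prod.smul_snd, smul_eq_mul]; ring
  have hup : wedge u (z - (wedge z v / d) • u - (wedge u z / d) • v) = wedge u z % d := by
    rw [Int.emod_def]; simp only [d, wedge, Prod.fst_sub, Prod.snd_sub, Prod.smul_fst,
      Prod.smul_snd, smul_eq_mul]; ring
  rw [hpv, hup]
  have h₁ := Int.emod_nonneg (wedge z v) (show d ≠ 0 by omega)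
  have h₂ := Int.emod_nonneg (wedge u z) (show d ≠ 0 by omega)
  refine ⟨h₁, Int.emod_lt_of_pos _ (by omega), h₂, Int.emod_lt_of_pos _ (by omega), ?_⟩
  by_contra! h
  exact hz ⟨Int.dvd_of_emod_eq_zero (by omega), Int.dvd_of_emod_eq_zero (by omega)⟩

theorem wedge_eq_one_of_forall_mem_triangle (hd : 0 < wedge u v)
    (h : ∀ z, 0 ≤ wedge z v → 0 ≤ wedge u z → wedge z v + wedge u z ≤ wedge u v →
      z = 0 ∨ z = u ∨ z = v) :
    wedge u v = 1 := by
  by_contra hne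
  obtain ⟨p, hp₁, hp₂, hp₃, hp₄, hp₅⟩ :=
    exists_wedge_lt_of_one_lt_wedge (show 1 < wedge u v by omega)
  have hvertex : ∀ z, wedge z v < wedge u v → wedge u z < wedge u v →
      0 < wedge z v + wedge u z → ¬ (z = 0 ∨ z = u ∨ z = v) := by
    rintro z h₁ h₂ h₃ (rfl | rfl | rfl)
    · simp [wedge] at h₃
    · exact h₁.ne rfl
    · exact h₂.ne rfl
  rcases le_or_gt (wedge p v + wedge u p) (wedge u v) with hle | hgt
  · exact hvertex p hp₂ hp₄ hp₅ (h p hp₁ hp₃ hle)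
  · -- the point reflection through the centre of the parallelogram `0, u, u + v, v`
    have hqv : wedge (u + v - p) v = wedge u v - wedge p v := by
      simp only [wedge, Prod.fst_sub, Prod.snd_sub, Prod.fst_add, Prod.snd_add]; ring
    have huq : wedge u (u + v - p) = wedge u v - wedge u p := by
      simp only [wedge, Prod.fst_sub, Prod.snd_sub, Prod.fst_add, Prod.snd_add]; ring
    exact hvertex (u + v - p) (by omega) (by omega) (by omega)
      (h (u + v - p) (by omega) (by omega) (by omega))

end Lattice

structure IsEmptyLatticePolygon {ι : Type*} (q : ι → ℤ × ℤ) : Prop where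
  convexIndependent : ConvexIndependent ℝ (intPairToR2 ∘ q)
  mem_range_of_mem_convexHull :
    ∀ z, intPairToR2 z ∈ convexHull ℝ (range (intPairToR2 ∘ q)) → z ∈ range q

namespace IsEmptyLatticePolygon

variable {ι : Type*} {q : ι → ℤ × ℤ}

theorem eq_of_mem_convexHull_triple (hq : IsEmptyLatticePolygon q) {i j k : ι} {z : ℤ × ℤ}
    (hz : intPairToR2 z ∈
      convexHull ℝ {intPairToR2 (q i), intPairToR2 (q j), intPairToR2 (q k)}) :
    z = q i ∨ z = q j ∨ z = q k := by
  have himage : {intPairToR2 (q i), intPairToR2 (q j), intPairToR2 (q k)} =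
      (intPairToR2 ∘ q) '' {i, j, k} := by
    simp [image_insert_eq]
  rw [himage] at hz
  obtain ⟨l, rfl⟩ :=
    hq.mem_range_of_mem_convexHull z (convexHull_mono (image_subset_range _ _) hz)
  rcases (hq.convexIndependent.mem_convexHull_iff _ l).1 hz with rfl | rfl | rfl <;> simp

theorem wedge_sub_eq_one (hq : IsEmptyLatticePolygon q) {i j k : ι}
    (hd : 0 < wedge (q j - q i) (q k - q i)) : wedge (q j - q i) (q k - q i) = 1 := by
  refine wedge_eq_one_of_forall_mem_triangle hd fun z h₁ h₂ h₃ => ?_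
  have hz : intPairToR2 (q i + z) ∈
      convexHull ℝ {intPairToR2 (q i), intPairToR2 (q j), intPairToR2 (q k)} := by
    apply mem_convexHull_triple_of_wedge <;>
      simp only [← intPairToR2_sub, wedge_intPairToR2, add_sub_cancel_left] <;>
      exact_mod_cast ‹_›
  rcases hq.eq_of_mem_convexHull_triple hz with h | h | h
  · exact Or.inl (by simpa using h)
  · exact Or.inr (Or.inl (eq_sub_of_add_eq' h))
  · exact Or.inr (Or.inr (eq_sub_of_add_eq' h))

theorem abs_wedge_sub_eq_one (hq : IsEmptyLatticePolygon q) {i j k : ι} (hij : i ≠ j)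
    (hik : i ≠ k) (hjk : j ≠ k) : |wedge (q j - q i) (q k - q i)| = 1 := by
  have hne : wedge (q j - q i) (q k - q i) ≠ 0 := by
    have := wedge_sub_ne_zero_of_notMem_segment (hq.convexIndependent.notMem_segment hij hik)
      (hq.convexIndependent.notMem_segment hij.symm hjk)
      (hq.convexIndependent.notMem_segment hik.symm hjk.symm)
    simp only [Function.comp_apply, ← intPairToR2_sub, wedge_intPairToR2] at this
    exact_mod_cast this
  rcases hne.lt_or_gt with hneg | hpos
  · have := hq.wedge_sub_eq_one (i := i) (j := k) (k := j) (by rw [wedge_anticomm]; omega)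
    rw [wedge_anticomm] at this
    rw [abs_of_neg hneg]
    omega
  · rw [abs_of_pos hpos, hq.wedge_sub_eq_one hpos]

end IsEmptyLatticePolygon

theorem wedge_mul_wedge_nonpos_of_segment_inter_nonempty_intPairToR2 {x y z w : ℤ × ℤ}
    (h : (segment ℝ (intPairToR2 x) (intPairToR2 z) ∩
      segment ℝ (intPairToR2 y) (intPairToR2 w)).Nonempty) :
    wedge (z - x) (y - x) * wedge (z - x) (w - x) ≤ 0 := by
  have := wedge_mul_wedge_nonpos_of_segment_inter_nonempty h
  simp only [← intPairToR2_sub, wedge_intPairToR2] at this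
  exact_mod_cast this

theorem sub_eq_sub_of_abs_wedge_eq_one {A B C D : ℤ × ℤ} (hABC : |wedge (B - A) (C - A)| = 1)
    (hACD : |wedge (C - A) (D - A)| = 1) (hABD : |wedge (B - A) (D - A)| = 1)
    (hAC : wedge (C - A) (B - A) * wedge (C - A) (D - A) ≤ 0)
    (hBD : wedge (D - B) (A - B) * wedge (D - B) (C - B) ≤ 0) : B - A = C - D := by
  have hcramer := wedge_smul_add_wedge_smul (B - A) (C - A) (D - A)
  rw [wedge_anticomm (C - A) (D - A)] at hcramer
  rw [wedge_anticomm (B - A) (C - A)] at hAC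
  have hBD' : wedge (B - A) (D - A) *
      (wedge (B - A) (D - A) - wedge (B - A) (C - A) - wedge (C - A) (D - A)) ≤ 0 := by
    convert hBD using 2 <;> simp only [wedge, Prod.fst_sub, Prod.snd_sub] <;> ring
  generalize wedge (B - A) (C - A) = s at *
  generalize wedge (C - A) (D - A) = t at *
  generalize wedge (B - A) (D - A) = k at *
  obtain ⟨rfl, rfl⟩ : s = t ∧ s = k := by
    rcases (abs_eq zero_le_one).1 hABC with rfl | rfl <;>
      rcases (abs_eq zero_le_one).1 hACD with rfl | rfl <;>
      rcases (abs_eq zero_le_one).1 hABD with rfl | rfl <;> omega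
  have hs : s ≠ 0 := by rintro rfl; simp at hABC
  have : s • (C - D - (B - A)) = 0 := by linear_combination (norm := module) hcramer
  exact (sub_eq_zero.1 ((smul_eq_zero.1 this).resolve_left hs)).symm

/-- An empty convex lattice quadrilateral (in cyclic order) is a parallelogram,
and in fact a fundamental parallelogram of `ℤ²`. -/
theorem empty_lattice_quadrilateral_is_fundamental_parallelogram (A B C D : ℤ × ℤ)
    (hA : intPairToR2 A ∉ convexHull ℝ
      ({intPairToR2 B, intPairToR2 C, intPairToR2 D} : Set (ℝ × ℝ)))
    (hB : intPairToR2 B ∉ convexHull ℝ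
      ({intPairToR2 A, intPairToR2 C, intPairToR2 D} : Set (ℝ × ℝ)))
    (hC : intPairToR2 C ∉ convexHull ℝ
      ({intPairToR2 A, intPairToR2 B, intPairToR2 D} : Set (ℝ × ℝ)))
    (hD : intPairToR2 D ∉ convexHull ℝ
      ({intPairToR2 A, intPairToR2 B, intPairToR2 C} : Set (ℝ × ℝ)))
    (hcyclic : (segment ℝ (intPairToR2 A) (intPairToR2 C) ∩
      segment ℝ (intPairToR2 B) (intPairToR2 D)).Nonempty)
    (hempty : ∀ z : ℤ × ℤ, intPairToR2 z ∈ convexHull ℝ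
      ({intPairToR2 A, intPairToR2 B, intPairToR2 C, intPairToR2 D} : Set (ℝ × ℝ)) →
      z = A ∨ z = B ∨ z = C ∨ z = D) :
    B - A = C - D ∧
    ((B - A).1 * (D - A).2 - (B - A).2 * (D - A).1 = 1 ∨
     (B - A).1 * (D - A).2 - (B - A).2 * (D - A).1 = -1) := by
  have hcomp : intPairToR2 ∘ ![A, B, C, D] =
      ![intPairToR2 A, intPairToR2 B, intPairToR2 C, intPairToR2 D] := by
    ext i : 1; fin_cases i <;> rfl
  have hq : IsEmptyLatticePolygon ![A, B, C, D] := by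
    refine ⟨hcomp ▸ convexIndependent_fin_four hA hB hC hD, fun z hz => ?_⟩
    rcases hempty z (by convert hz using 2; ext; simp [Fin.exists_fin_succ, eq_comm]) with
      rfl | rfl | rfl | rfl
    exacts [⟨0, rfl⟩, ⟨1, rfl⟩, ⟨2, rfl⟩, ⟨3, rfl⟩]
  have hABD : |wedge (B - A) (D - A)| = 1 :=
    hq.abs_wedge_sub_eq_one (i := 0) (j := 1) (k := 3) (by decide) (by decide) (by decide)
  refine ⟨sub_eq_sub_of_abs_wedge_eq_one ?_ ?_ hABD
    (wedge_mul_wedge_nonpos_of_segment_inter_nonempty_intPairToR2 hcyclic)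
    (wedge_mul_wedge_nonpos_of_segment_inter_nonempty_intPairToR2 (inter_comm _ _ ▸ hcyclic)),
    (abs_eq zero_le_one).1 hABD⟩
  · exact hq.abs_wedge_sub_eq_one (i := 0) (j := 1) (k := 2) (by decide) (by decide) (by decide)
  · exact hq.abs_wedge_sub_eq_one (i := 0) (j := 2) (k := 3) (by decide) (by decide) (by decide)
end

section
/- There is no empty convex lattice pentagon: if A₁, …, A₅ are five distinct points of ℤ² in convex position (each a vertex of the convex hull of {A₁,…,A₅}), then the convex hull of {A₁,…,A₅} contains a point of ℤ² different from A₁, …, A₅. -/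
/-!
Among five lattice points two agree modulo `2` in both coordinates, so their midpoint is again a
lattice point. It lies in the convex hull, and it cannot be one of the five points: a point of a
family in convex position is never the midpoint of two other members of the family.
-/

section ConvexPosition

variable {𝕜 E ι : Type*} [AddCommGroup E] {p : ι → E}

theorem convexIndependent_of_forall_notMem_convexHull_image_ne [Semiring 𝕜] [PartialOrder 𝕜]
    [Module 𝕜 E] (hp : ∀ i, p i ∉ convexHull 𝕜 (p '' {j | j ≠ i})) : ConvexIndependent 𝕜 p :=
  convexIndependent_iff_notMem_convexHull_sdiff.mpr fun i _ hi =>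
    hp i <| convexHull_mono (Set.image_mono fun _ hj => hj.2) hi

theorem ConvexIndependent.midpoint_ne [Ring 𝕜] [LinearOrder 𝕜] [IsStrictOrderedRing 𝕜]
    [Invertible (2 : 𝕜)] [Module 𝕜 E] (hp : ConvexIndependent 𝕜 p)
    {i j : ι} (hij : i ≠ j) (k : ι) : midpoint 𝕜 (p i) (p j) ≠ p k := by
  intro hk
  have hmem : p k ∈ convexHull 𝕜 (p '' {i, j}) := by
    rw [← hk, Set.image_pair]
    exact segment_subset_convexHull (Set.mem_insert _ _)
      (Set.mem_insert_of_mem _ (Set.mem_singleton _))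
      (midpoint_mem_segment (𝕜 := 𝕜) (p i) (p j))
  rcases hp _ _ hmem with rfl | rfl
  · exact hij (hp.injective ((midpoint_eq_left_iff 𝕜).mp hk))
  · exact hij (hp.injective ((midpoint_eq_right_iff 𝕜).mp hk))

end ConvexPosition

theorem Int.exists_add_eq_two_mul_of_cast_eq {a b : ℤ} (h : (a : ZMod 2) = b) :
    ∃ c, a + b = 2 * c := by
  have := (ZMod.intCast_eq_intCast_iff_dvd_sub a b 2).mp h
  exact ⟨(a + b) / 2, by omega⟩

theorem exists_ne_add_eq_two_smul {ι : Type*} [Fintype ι] (hι : 4 < Fintype.card ι)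
    (f : ι → ℤ × ℤ) : ∃ i j, i ≠ j ∧ ∃ z, f i + f j = (2 : ℤ) • z := by
  obtain ⟨i, j, hij, hpar⟩ := Fintype.exists_ne_map_eq_of_card_lt
    (fun i => (((f i).1 : ZMod 2), ((f i).2 : ZMod 2))) (by simpa using hι)
  obtain ⟨c, hc⟩ := Int.exists_add_eq_two_mul_of_cast_eq (congrArg Prod.fst hpar)
  obtain ⟨d, hd⟩ := Int.exists_add_eq_two_mul_of_cast_eq (congrArg Prod.snd hpar)
  exact ⟨i, j, hij, (c, d), Prod.ext hc hd⟩

theorem intPairToR2_eq_midpoint {a b z : ℤ × ℤ} (h : a + b = (2 : ℤ) • z) :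
    intPairToR2 z = midpoint ℝ (intPairToR2 a) (intPairToR2 b) := by
  have h₁ : a.1 + b.1 = 2 * z.1 := by simpa using congrArg Prod.fst h
  have h₂ : a.2 + b.2 = 2 * z.2 := by simpa using congrArg Prod.snd h
  have h₁' : (a.1 + b.1 : ℝ) = 2 * z.1 := by exact_mod_cast h₁
  have h₂' : (a.2 + b.2 : ℝ) = 2 * z.2 := by exact_mod_cast h₂
  rw [midpoint_eq_smul_add]
  ext <;> simp [intPairToR2] <;> linarith

theorem no_empty_lattice_pentagon_general (A : Fin 5 → ℤ × ℤ)
    (hvert : ∀ i, intPairToR2 (A i) ∉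
      convexHull ℝ ((fun j => intPairToR2 (A j)) '' {j | j ≠ i})) :
    ∃ z : ℤ × ℤ, intPairToR2 z ∈ convexHull ℝ (Set.range (fun i => intPairToR2 (A i))) ∧
      ∀ i, z ≠ A i := by
  have hconv := convexIndependent_of_forall_notMem_convexHull_image_ne hvert
  obtain ⟨i, j, hij, z, hz⟩ := exists_ne_add_eq_two_smul (by simp) A
  have hmid := intPairToR2_eq_midpoint hz
  refine ⟨z, ?_, fun k hk => hconv.midpoint_ne hij k ?_⟩
  · rw [hmid]
    exact segment_subset_convexHull (Set.mem_range_self i) (Set.mem_range_self j)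
      (midpoint_mem_segment _ _)
  · rw [← hmid, hk]

/-- There is no empty convex lattice pentagon: the convex hull of any five lattice points
in convex position contains a further lattice point. -/
theorem no_empty_lattice_pentagon (A : Fin 5 → ℤ × ℤ)
    (hinj : Function.Injective A)
    (hvert : ∀ i, intPairToR2 (A i) ∉
      convexHull ℝ ((fun j => intPairToR2 (A j)) '' {j | j ≠ i})) :
    ∃ z : ℤ × ℤ, intPairToR2 z ∈ convexHull ℝ (Set.range (fun i => intPairToR2 (A i))) ∧
      ∀ i, z ≠ A i :=
  no_empty_lattice_pentagon_general A hvert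
end

section
/- Let x, y be real numbers with y > 1, and let T be the triangle with vertices A = (0,0), B = (1,0), M = (x,y) in ℝ². Then T contains the point (⌊x/y⌋ + 1, 1) or T contains the point (x − ⌊x/y⌋, y − 1), where ⌊·⌋ denotes the floor function. (The first point is an integer point distinct from A, B, M, and the second point belongs to the translate M + ℤ² and is distinct from M; in either case the triangle ABM contains a point of ℤ² ∪ (M + ℤ²) other than its vertices.) -/
/-!
Write `x = f y + r` with `f = ⌊x/y⌋` and `0 ≤ r < y`. A point `(p, q)` lies in the triangle with
vertices `(0,0)`, `(1,0)`, `(x,y)` iff its barycentric coordinates `q/y`, `p - q x/y` and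
`1 - p - q (1 - x)/y` are nonnegative. For `(f + 1, 1)` these are `1/y`, `(y - r)/y` and
`(r - 1)/y`; for `(x - f, y - 1)` they are `(y - 1)/y`, `r/y` and `(1 - r)/y`. So the first point
works when `r ≥ 1` and the second when `r ≤ 1`; both differ from the vertices because their
second coordinates are `1` and `y - 1`, neither of which is `0` or `y`.
-/

theorem smul_add_smul_add_smul_mem_convexHull {R E : Type*} [Field R] [LinearOrder R]
    [IsStrictOrderedRing R] [AddCommGroup E] [Module R E] (u v w : E) {a b c : R}
    (ha : 0 ≤ a) (hb : 0 ≤ b) (hc : 0 ≤ c) (habc : a + b + c = 1) :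
    a • u + b • v + c • w ∈ convexHull R {u, v, w} := by
  have := (convex_convexHull R ({u, v, w} : Set E)).sum_mem (t := Finset.univ)
    (w := ![a, b, c]) (z := ![u, v, w]) (by simp [Fin.forall_fin_succ, ha, hb, hc])
    (by simp [Fin.sum_univ_three, habc])
    (fun i _ ↦ subset_convexHull R _ (by fin_cases i <;> simp))
  simpa [Fin.sum_univ_three] using this

theorem mem_convexHull_triangle {x y p q : ℝ} (hy : 0 < y) (hq : 0 ≤ q)
    (hleft : q * x ≤ p * y) (hright : p * y + q ≤ q * x + y) :
    (p, q) ∈ convexHull ℝ ({(0, 0), (1, 0), (x, y)} : Set (ℝ × ℝ)) := by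
  have hmem := smul_add_smul_add_smul_mem_convexHull ((0 : ℝ), (0 : ℝ)) (1, 0) (x, y)
    (a := 1 - (p * y - q * x) / y - q / y) (b := (p * y - q * x) / y) (c := q / y)
    (by rw [sub_sub, ← add_div, sub_nonneg, div_le_one hy]; linarith)
    (div_nonneg (by linarith) hy.le) (div_nonneg hq hy.le) (by ring)
  convert hmem using 1
  ext <;> simp only [Prod.fst_add, Prod.snd_add, Prod.smul_fst, Prod.smul_snd, smul_eq_mul] <;>
    field_simp <;> ring

/-- The triangle with vertices `(0,0)`, `(1,0)`, `(x,y)` with `y > 1` contains the integer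
point `(⌊x/y⌋ + 1, 1)` or the point `(x − ⌊x/y⌋, y − 1)` of the translate `(x,y) + ℤ²`;
in either case this point is distinct from the three vertices. -/
theorem triangle_contains_lattice_or_translate_point (x y : ℝ) (hy : 1 < y)
    (T : Set (ℝ × ℝ))
    (hT : T = convexHull ℝ ({((0 : ℝ), (0 : ℝ)), (1, 0), (x, y)} : Set (ℝ × ℝ))) :
    (((⌊x / y⌋ : ℝ) + 1, (1 : ℝ)) ∈ T ∧
      ((⌊x / y⌋ : ℝ) + 1, (1 : ℝ)) ≠ ((0 : ℝ), (0 : ℝ)) ∧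
      ((⌊x / y⌋ : ℝ) + 1, (1 : ℝ)) ≠ ((1 : ℝ), (0 : ℝ)) ∧
      ((⌊x / y⌋ : ℝ) + 1, (1 : ℝ)) ≠ (x, y)) ∨
    ((x - (⌊x / y⌋ : ℝ), y - 1) ∈ T ∧
      (x - (⌊x / y⌋ : ℝ), y - 1) ≠ ((0 : ℝ), (0 : ℝ)) ∧
      (x - (⌊x / y⌋ : ℝ), y - 1) ≠ ((1 : ℝ), (0 : ℝ)) ∧
      (x - (⌊x / y⌋ : ℝ), y - 1) ≠ (x, y)) := by
  have hy₀ : 0 < y := one_pos.trans hy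
  set f : ℝ := (⌊x / y⌋ : ℝ)
  have hfloor_le : f * y ≤ x := (le_div_iff₀ hy₀).mp (Int.floor_le _)
  have hlt_floor_succ : x < (f + 1) * y := (div_lt_iff₀ hy₀).mp (Int.lt_floor_add_one _)
  subst hT
  rcases le_total 1 (x - f * y) with hrem | hrem
  · left
    refine ⟨mem_convexHull_triangle hy₀ zero_le_one (by linarith) (by linarith), ?_, ?_, ?_⟩ <;>
      simp only [ne_eq, Prod.mk.injEq, not_and] <;> intro <;> linarith
  · right
    refine ⟨mem_convexHull_triangle hy₀ (by linarith) (by linarith) (by linarith), ?_, ?_, ?_⟩ <;>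
      simp only [ne_eq, Prod.mk.injEq, not_and] <;> intro <;> linarith
end

section
/- (Doignon's theorem) Let F be a finite family of convex subsets of ℝ^d with at least 2^d members. If every 2^d members of F have a common point belonging to ℤ^d, then all members of F have a common point belonging to ℤ^d. -/
/-!
By induction on the number of sets it suffices to treat `n > 2 ^ d` convex sets any `n - 1` of
which share a lattice point. Let `p i` be a common lattice point of the sets other than `F i`; if
two of them coincide, that point lies in every set. Otherwise any lattice point common to all the
hulls `conv ({p j} \ {p i})` lies in every `F i`. So it suffices to find, for a set `V` of more
than `2 ^ d` lattice points, a lattice point in `⋂ v ∈ V, conv (V \ {v})`.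

This is done by strong induction on the number of lattice points of `conv V`. If some `c ∈ V`
lies in `conv (V \ {c})`, take `c`. Otherwise, by pigeonhole on the parity vectors, two points
`a ≠ b` of `V` have a lattice midpoint `y ∉ V`. Exchanging a point of `V` for a lattice point
of `conv V` outside `V` removes the old point from the hull, so the induction hypothesis applies:
exchanging `a` for `y` gives a point `z` in all the hulls except possibly `conv (V \ {b})`, and
exchanging `b` for `z` gives a point in all of them.
-/

theorem mem_convexHull_of_mem_convexHull_insert_of_mem_convexHull_insert_s17 {𝕜 E : Type*} [Field 𝕜]
    [LinearOrder 𝕜] [IsStrictOrderedRing 𝕜] [AddCommGroup E] [Module 𝕜 E] {s : Set E} {x w : E}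
    (hx : x ∈ convexHull 𝕜 (insert w s)) (hw : w ∈ convexHull 𝕜 (insert x s)) (hxw : x ≠ w) :
    x ∈ convexHull 𝕜 s := by
  rcases s.eq_empty_or_nonempty with rfl | hs
  · simp_all
  rw [convexHull_insert hs, mem_convexJoin] at hx hw
  obtain ⟨_, hw', u, hu, hxu⟩ := hx
  obtain ⟨_, hx', v, hv, hwv⟩ := hw
  rw [Set.mem_singleton_iff.1 hw'] at hxu
  rw [Set.mem_singleton_iff.1 hx'] at hwv
  -- `v, w, x, u` lie on a line in this order
  have hvxu : Wbtw 𝕜 v x u :=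
    (mem_segment_iff_wbtw.1 hwv).symm.trans_expand_right (mem_segment_iff_wbtw.1 hxu) hxw.symm
  exact (convex_convexHull 𝕜 s).segment_subset hv hu hvxu.mem_segment

open Set Finset Topology

namespace Doignon

variable {d : ℕ}

def toReal (z : Fin d → ℤ) : Fin d → ℝ := fun j => z j

theorem toReal_injective : Function.Injective (toReal (d := d)) :=
  fun _ _ h => funext fun j => Int.cast_injective (congrFun h j)

theorem mem_range_toReal {p : Fin d → ℝ} : p ∈ range toReal ↔ ∀ j, ∃ z : ℤ, p j = z := by
  refine ⟨?_, fun h => ⟨fun j => (h j).choose, funext fun j => (h j).choose_spec.symm⟩⟩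
  rintro ⟨z, rfl⟩ j
  exact ⟨z j, rfl⟩

theorem exists_toReal_eq_midpoint {V : Finset (Fin d → ℤ)} (hV : 2 ^ d < #V) :
    ∃ a ∈ V, ∃ b ∈ V, a ≠ b ∧ ∃ y, toReal y = midpoint ℝ (toReal a) (toReal b) := by
  have hcard : #(univ : Finset (Fin d → ZMod 2)) < #V := by simpa using hV
  obtain ⟨a, ha, b, hb, hab, hparity⟩ := exists_ne_map_eq_of_card_lt_of_maps_to hcard
    (f := fun v j => (v j : ZMod 2)) fun v _ => mem_univ _
  have hdvd (j : Fin d) : (2 : ℤ) ∣ b j - a j :=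
    (ZMod.intCast_eq_intCast_iff_dvd_sub _ _ 2).1 (congrFun hparity j)
  choose k hk using hdvd
  refine ⟨a, ha, b, hb, hab, a + k, funext fun j => ?_⟩
  have hb : (b j : ℝ) = a j + 2 * k j := by exact_mod_cast sub_eq_iff_eq_add'.1 (hk j)
  simp only [toReal, midpoint_eq_smul_add, invOf_eq_inv, Pi.add_apply, Pi.smul_apply,
    smul_eq_mul, hb, Int.cast_add]
  ring

def latticeHull (V : Finset (Fin d → ℤ)) : Set (Fin d → ℝ) :=
  convexHull ℝ (toReal '' V)

theorem latticeHull_insert (V : Finset (Fin d → ℤ)) (w : Fin d → ℤ) :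
    latticeHull (insert w V) = convexHull ℝ (insert (toReal w) (toReal '' V)) := by
  rw [latticeHull, coe_insert, image_insert_eq]

theorem toReal_mem_latticeHull {V : Finset (Fin d → ℤ)} {v : Fin d → ℤ} (hv : v ∈ V) :
    toReal v ∈ latticeHull V :=
  subset_convexHull ℝ _ (mem_image_of_mem _ hv)

theorem latticeHull_mono {V W : Finset (Fin d → ℤ)} (h : V ⊆ W) : latticeHull V ⊆ latticeHull W :=
  convexHull_mono (image_mono (coe_subset.2 h))

theorem latticeHull_insert_subset {V W : Finset (Fin d → ℤ)} {w : Fin d → ℤ}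
    (hw : toReal w ∈ latticeHull W) (h : V ⊆ W) : latticeHull (insert w V) ⊆ latticeHull W := by
  refine convexHull_min ?_ (convex_convexHull ℝ _)
  rw [coe_insert, image_insert_eq]
  exact Set.insert_subset hw ((image_mono (coe_subset.2 h)).trans (subset_convexHull ℝ _))

theorem finite_setOf_toReal_mem_latticeHull (V : Finset (Fin d → ℤ)) :
    {z | toReal z ∈ latticeHull V}.Finite :=
  ((IsClosedEmbedding.piMap fun _ => Int.isClosedEmbedding_coe_real).isProperMap
    |>.isCompact_preimage ((V.finite_toSet.image _).isCompact_convexHull ℝ)).finite_of_discrete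

noncomputable def latticeCount (V : Finset (Fin d → ℤ)) : ℕ :=
  {z | toReal z ∈ latticeHull V}.ncard

theorem latticeCount_lt_of_subset {V W : Finset (Fin d → ℤ)} (h : latticeHull W ⊆ latticeHull V)
    {x : Fin d → ℤ} (hxV : toReal x ∈ latticeHull V) (hxW : toReal x ∉ latticeHull W) :
    latticeCount W < latticeCount V :=
  ncard_lt_ncard (ssubset_of_subset_not_subset (fun _ hz => h hz) fun hsub => hxW (hsub hxV))
    (finite_setOf_toReal_mem_latticeHull V)


theorem toReal_mem_latticeHull_of_eq_midpoint {W : Finset (Fin d → ℤ)} {a b y : Fin d → ℤ}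
    (hy : toReal y = midpoint ℝ (toReal a) (toReal b)) (ha : a ∈ W) (hb : b ∈ W) :
    toReal y ∈ latticeHull W :=
  segment_subset_convexHull (mem_image_of_mem _ ha) (mem_image_of_mem _ hb)
    (hy ▸ midpoint_mem_segment _ _)

theorem toReal_notMem_latticeHull_insert_erase {V : Finset (Fin d → ℤ)} {x w : Fin d → ℤ}
    (hx : x ∈ V) (hxV : toReal x ∉ latticeHull (V.erase x)) (hw : toReal w ∈ latticeHull V)
    (hwx : w ≠ x) : toReal x ∉ latticeHull (insert w (V.erase x)) := by
  rw [latticeHull_insert]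
  refine fun h => hxV (mem_convexHull_of_mem_convexHull_insert_of_mem_convexHull_insert_s17 h ?_
    (toReal_injective.ne hwx.symm))
  rwa [← latticeHull_insert, insert_erase hx]

def IsCommonPoint (V : Finset (Fin d → ℤ)) (z : Fin d → ℤ) : Prop :=
  ∀ v ∈ V, toReal z ∈ latticeHull (V.erase v)

theorem IsCommonPoint.of_mem_latticeHull_erase {V : Finset (Fin d → ℤ)} {c : Fin d → ℤ}
    (hc : c ∈ V) (hcV : toReal c ∈ latticeHull (V.erase c)) : IsCommonPoint V c := by
  intro v hv
  rcases eq_or_ne v c with rfl | hvc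
  · exact hcV
  · exact toReal_mem_latticeHull (mem_erase.2 ⟨hvc.symm, hc⟩)

section Exchange

variable {V : Finset (Fin d → ℤ)} {x w z : Fin d → ℤ}

theorem latticeCount_insert_erase_lt (hV : ∀ c ∈ V, toReal c ∉ latticeHull (V.erase c))
    (hx : x ∈ V) (hwV : w ∉ V) (hw : toReal w ∈ latticeHull V) :
    latticeCount (insert w (V.erase x)) < latticeCount V :=
  latticeCount_lt_of_subset (latticeHull_insert_subset hw (erase_subset x V))
    (toReal_mem_latticeHull hx)
    (toReal_notMem_latticeHull_insert_erase hx (hV x hx) hw fun h => hwV (h ▸ hx))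

theorem IsCommonPoint.toReal_mem_latticeHull_insert_erase
    (hz : IsCommonPoint (insert w (V.erase x)) z) (hwV : w ∉ V) {v : Fin d → ℤ} (hv : v ∈ V)
    (hvx : v ≠ x) : toReal z ∈ latticeHull (insert w (V.erase v)) := by
  have h := hz v (mem_insert_of_mem (mem_erase.2 ⟨hvx, hv⟩))
  rw [erase_insert_of_ne (ne_of_mem_of_not_mem hv hwV).symm, erase_right_comm] at h
  exact latticeHull_mono (insert_subset_insert w (erase_subset x _)) h

theorem IsCommonPoint.toReal_mem_latticeHull_erase
    (hz : IsCommonPoint (insert w (V.erase x)) z) (hwV : w ∉ V) {v : Fin d → ℤ} (hv : v ∈ V)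
    (hv' : v = x ∨ toReal w ∈ latticeHull (V.erase v)) :
    toReal z ∈ latticeHull (V.erase v) := by
  rcases eq_or_ne v x with rfl | hvx
  · simpa [erase_insert fun h => hwV (mem_of_mem_erase h)] using hz w (mem_insert_self _ _)
  · exact latticeHull_insert_subset (hv'.resolve_left hvx) subset_rfl
      (hz.toReal_mem_latticeHull_insert_erase hwV hv hvx)

theorem IsCommonPoint.notMem_of_insert_erase (hz : IsCommonPoint (insert w (V.erase x)) z)
    (hV : ∀ c ∈ V, toReal c ∉ latticeHull (V.erase c)) (hwV : w ∉ V)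
    (hw : toReal w ∈ latticeHull V) : z ∉ V := by
  intro hzV
  rcases eq_or_ne z x with rfl | hzx
  · exact hV z hzV (hz.toReal_mem_latticeHull_erase hwV hzV (.inl rfl))
  · exact toReal_notMem_latticeHull_insert_erase hzV (hV z hzV) hw
      (ne_of_mem_of_not_mem hzV hwV).symm (hz.toReal_mem_latticeHull_insert_erase hwV hzV hzx)

end Exchange

theorem exists_isCommonPoint (V : Finset (Fin d → ℤ)) (hV : 2 ^ d < #V) :
    ∃ z, IsCommonPoint V z := by
  induction hn : latticeCount V using Nat.strong_induction_on generalizing V with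
  | _ n ih =>
  by_cases hdep : ∃ c ∈ V, toReal c ∈ latticeHull (V.erase c)
  · obtain ⟨c, hc, hcV⟩ := hdep
    exact ⟨c, .of_mem_latticeHull_erase hc hcV⟩
  push Not at hdep
  have exchange {x w : Fin d → ℤ} (hx : x ∈ V) (hwV : w ∉ V) (hw : toReal w ∈ latticeHull V) :
      ∃ z, IsCommonPoint (insert w (V.erase x)) z := by
    refine ih _ (hn ▸ latticeCount_insert_erase_lt hdep hx hwV hw) _ ?_ rfl
    rwa [card_insert_of_notMem fun h => hwV (mem_of_mem_erase h), card_erase_add_one hx]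
  obtain ⟨a, ha, b, hb, hab, y, hy⟩ := exists_toReal_eq_midpoint hV
  have hy_mem {v : Fin d → ℤ} (hva : v ≠ a) (hvb : v ≠ b) :
      toReal y ∈ latticeHull (V.erase v) :=
    toReal_mem_latticeHull_of_eq_midpoint hy (mem_erase.2 ⟨hva.symm, ha⟩)
      (mem_erase.2 ⟨hvb.symm, hb⟩)
  have hyV : y ∉ V := by
    intro hyV
    have hya : y ≠ a := by
      rintro rfl
      exact hab (toReal_injective ((left_eq_midpoint_iff ℝ).1 hy))
    have hyb : y ≠ b := by
      rintro rfl
      exact hab (toReal_injective ((right_eq_midpoint_iff ℝ).1 hy))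
    exact hdep y hyV (hy_mem hya hyb)
  have hyhull := toReal_mem_latticeHull_of_eq_midpoint hy ha hb
  obtain ⟨z, hz⟩ := exchange ha hyV hyhull
  have hz_mem {v : Fin d → ℤ} (hv : v ∈ V) (hvb : v ≠ b) : toReal z ∈ latticeHull (V.erase v) :=
    hz.toReal_mem_latticeHull_erase hyV hv ((eq_or_ne v a).imp_right (hy_mem · hvb))
  have hzV := hz.notMem_of_insert_erase hdep hyV hyhull
  obtain ⟨w, hw⟩ := exchange hb hzV (latticeHull_mono (erase_subset a V) (hz_mem ha hab))
  exact ⟨w, fun v hv => hw.toReal_mem_latticeHull_erase hzV hv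
    ((eq_or_ne v b).imp_right (hz_mem hv))⟩

section Family

variable {ι : Type*} [DecidableEq ι] {F : ι → Set (Fin d → ℝ)}

theorem exists_toReal_mem_of_forall_erase (hF : ∀ i, Convex ℝ (F i)) {S : Finset ι}
    (hS : 2 ^ d < #S) (h : ∀ i ∈ S, ∃ z, ∀ j ∈ S.erase i, toReal z ∈ F j) :
    ∃ z, ∀ i ∈ S, toReal z ∈ F i := by
  choose! p hp using h
  by_cases hinj : Set.InjOn p S
  · obtain ⟨z, hz⟩ := exists_isCommonPoint (S.image p) (by rwa [card_image_of_injOn hinj])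
    refine ⟨z, fun i hi => convexHull_min ?_ (hF i) (hz (p i) (mem_image_of_mem p hi))⟩
    rintro _ ⟨_, hv, rfl⟩
    obtain ⟨j, hj, rfl⟩ := mem_image.1 (mem_of_mem_erase hv)
    exact hp j hj i (mem_erase.2 ⟨fun hij => ne_of_mem_erase hv (hij ▸ rfl), hi⟩)
  · obtain ⟨i, hi, j, hj, hpij, hij⟩ : ∃ i ∈ S, ∃ j ∈ S, p i = p j ∧ i ≠ j := by
      simpa [Set.InjOn] using hinj
    refine ⟨p i, fun l hl => ?_⟩
    rcases eq_or_ne l i with rfl | hli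
    · exact hpij ▸ hp j hj l (mem_erase.2 ⟨hij, hl⟩)
    · exact hp i hi l (mem_erase.2 ⟨hli, hl⟩)

theorem exists_toReal_mem_of_two_pow_le (hF : ∀ i, Convex ℝ (F i))
    (h : ∀ G : Finset ι, #G = 2 ^ d → ∃ z, ∀ i ∈ G, toReal z ∈ F i)
    (S : Finset ι) (hS : 2 ^ d ≤ #S) : ∃ z, ∀ i ∈ S, toReal z ∈ F i := by
  induction S using Finset.strongInduction with
  | H S ih =>
  rcases hS.eq_or_lt with hS | hS
  · exact h S hS.symm
  · refine exists_toReal_mem_of_forall_erase hF hS fun i hi => ih _ (erase_ssubset hi) ?_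
    rw [card_erase_of_mem hi]
    omega

end Family

end Doignon

/-- Doignon's theorem: the Helly number of `ℤ^d` is at most `2^d`. -/
theorem doignon (d : ℕ) (ι : Type) [Fintype ι] (F : ι → Set (Fin d → ℝ))
    (hFconv : ∀ i, Convex ℝ (F i))
    (hFcard : 2 ^ d ≤ Fintype.card ι)
    (hF : ∀ G : Finset ι, G.card = 2 ^ d →
      ∃ p : Fin d → ℝ, (∀ j, ∃ z : ℤ, p j = (z : ℝ)) ∧ ∀ i ∈ G, p ∈ F i) :
    ∃ p : Fin d → ℝ, (∀ j, ∃ z : ℤ, p j = (z : ℝ)) ∧ ∀ i, p ∈ F i := by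
  classical
  have hG (G : Finset ι) (hcard : #G = 2 ^ d) : ∃ z, ∀ i ∈ G, Doignon.toReal z ∈ F i := by
    obtain ⟨p, hp, hpF⟩ := hF G hcard
    obtain ⟨z, rfl⟩ := Doignon.mem_range_toReal.2 hp
    exact ⟨z, hpF⟩
  obtain ⟨z, hz⟩ := Doignon.exists_toReal_mem_of_two_pow_le hFconv hG univ (by rwa [card_univ])
  exact ⟨_, Doignon.mem_range_toReal.1 ⟨z, rfl⟩, fun i => hz i (mem_univ i)⟩
end

section
/- Let S ⊆ ℝ^d be a discrete set (every point of ℝ^d has a neighborhood containing at most one point of S), and suppose there exist n distinct points q₁, …, q_n of S in convex position (each q_i a vertex of the convex hull of {q₁,…,q_n}) such that the convex hull of {q₁,…,q_n} contains no point of S other than q₁, …, q_n. Then the Helly number of S is at least n: there exists a family of n convex subsets of ℝ^d such that every n−1 of them have a common point belonging to S, but no point of S belongs to all n of them. -/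
/-!
Take as the `n` convex sets the hulls of the vertex sets with one vertex deleted. Any `n - 1`
of them omit some index `i`, and all of them contain the vertex `q i ∈ S`. A point of `S` lying
in all `n` of them lies in the whole polytope, so by emptiness it is a vertex `q i`; but then it
lies in the hull of the other vertices, contradicting convex position.
-/

open Set

section
variable {𝕜 E ι : Type*} [Semiring 𝕜] [PartialOrder 𝕜] [AddCommMonoid E] [Module 𝕜 E]

theorem apply_mem_convexHull_image_ne (q : ι → E) {i j : ι} (hij : i ≠ j) :
    q i ∈ convexHull 𝕜 (q '' {k | k ≠ j}) :=
  subset_convexHull 𝕜 _ ⟨i, hij, rfl⟩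

theorem not_exists_mem_forall_convexHull_image_ne [Nonempty ι] {S : Set E} {q : ι → E}
    (hvert : ∀ i, q i ∉ convexHull 𝕜 (q '' {j | j ≠ i}))
    (hempty : ∀ p ∈ S, p ∈ convexHull 𝕜 (range q) → ∃ i, p = q i) :
    ¬ ∃ p ∈ S, ∀ i, p ∈ convexHull 𝕜 (q '' {j | j ≠ i}) := by
  rintro ⟨p, hpS, hp⟩
  have hp_hull : p ∈ convexHull 𝕜 (range q) :=
    convexHull_mono (image_subset_range _ _) (hp (Classical.arbitrary ι))
  obtain ⟨i, rfl⟩ := hempty p hpS hp_hull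
  exact hvert i (hp i)

end

theorem helly_number_lower_bound_of_empty_polytope_general (d n : ℕ) (hn : 1 ≤ n)
    (S : Set (Fin d → ℝ))
    (q : Fin n → (Fin d → ℝ))
    (hqS : ∀ i, q i ∈ S)
    (hvert : ∀ i, q i ∉ convexHull ℝ (q '' {j | j ≠ i}))
    (hempty : ∀ p ∈ S, p ∈ convexHull ℝ (Set.range q) → ∃ i, p = q i) :
    ∃ F : Fin n → Set (Fin d → ℝ),
      (∀ i, Convex ℝ (F i)) ∧
      (∀ G : Finset (Fin n), G.card = n - 1 → ∃ p ∈ S, ∀ i ∈ G, p ∈ F i) ∧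
      ¬ ∃ p ∈ S, ∀ i, p ∈ F i := by
  have : Nonempty (Fin n) := ⟨⟨0, hn⟩⟩
  refine ⟨fun i => convexHull ℝ (q '' {j | j ≠ i}), fun i => convex_convexHull ℝ _, ?_,
    not_exists_mem_forall_convexHull_image_ne hvert hempty⟩
  intro G hG
  obtain ⟨i, -, hiG⟩ := G.exists_mem_notMem_of_card_lt_card (t := Finset.univ)
    (by rw [Finset.card_univ, Fintype.card_fin]; omega)
  exact ⟨q i, hqS i, fun j hjG =>
    apply_mem_convexHull_image_ne q (ne_of_mem_of_not_mem hjG hiG).symm⟩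

/-- If a discrete set `S ⊆ ℝ^d` admits an empty convex polytope with `n` vertices in `S`,
then the Helly number of `S` is at least `n`. -/
theorem helly_number_lower_bound_of_empty_polytope (d n : ℕ) (hn : 1 ≤ n)
    (S : Set (Fin d → ℝ))
    (hdisc : ∀ x : Fin d → ℝ, ∃ U ∈ nhds x, (S ∩ U).Subsingleton)
    (q : Fin n → (Fin d → ℝ))
    (hinj : Function.Injective q)
    (hqS : ∀ i, q i ∈ S)
    (hvert : ∀ i, q i ∉ convexHull ℝ (q '' {j | j ≠ i}))
    (hempty : ∀ p ∈ S, p ∈ convexHull ℝ (Set.range q) → ∃ i, p = q i) :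
    ∃ F : Fin n → Set (Fin d → ℝ),
      (∀ i, Convex ℝ (F i)) ∧
      (∀ G : Finset (Fin n), G.card = n - 1 → ∃ p ∈ S, ∀ i ∈ G, p ∈ F i) ∧
      ¬ ∃ p ∈ S, ∀ i, p ∈ F i :=
  helly_number_lower_bound_of_empty_polytope_general d n hn S q hqS hvert hempty
end
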